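/- arXiv:2205.14784 — 3 statements merged into one kernel-verified Lean document; each statement's English description precedes it below -/
import Mathlib

section
/- Under the gossip model setup, for all t ∈ ℕ the expectation of the regular agents' state vector satisfies E{X(t)} = (1 − λ1)^t ηη^T X(0) + (1/λ1)[1 − (1 − λ1)^t] ηη^T R̄ z^s + (1 − λ2)^t ξξ^T X(0) + (1/λ2)[1 − (1 − λ2)^t] ξξ^T R̄ z^s + (1 − λ3)^t Γ X(0) + (1/λ3)[1 − (1 − λ3)^t] Γ R̄ z^s, where Γ := I_{r0 n} − ηη^T − ξξ^T is the orthogonal projection onto the orthogonal complement of span{η, ξ}. -/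
open MeasureTheory ProbabilityTheory Matrix Finset Filter

set_option autoImplicit false
set_option linter.unusedVariables false

noncomputable section

/-- Indicator vector (in regular coordinates) of agent `i`; zero if `i` is stubborn. -/
def regInd (nr ns : ℕ) (i : Fin (nr + ns)) : Fin nr → ℝ :=
  fun k => if (k : ℕ) = (i : ℕ) then 1 else 0

/-- Indicator vector (in stubborn coordinates) of agent `j`; zero if `j` is regular. -/
def stubInd (nr ns : ℕ) (j : Fin (nr + ns)) : Fin ns → ℝ :=
  fun k => if (k : ℕ) + nr = (j : ℕ) then 1 else 0

/-- The random update matrix Q determined by the selected edge `e` (with `e.1 < e.2`). -/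
def Qmat (nr ns : ℕ) (e : Fin (nr + ns) × Fin (nr + ns)) : Matrix (Fin nr) (Fin nr) ℝ :=
  1 - (2⁻¹ : ℝ) • Matrix.vecMulVec (regInd nr ns e.1 - regInd nr ns e.2)
      (regInd nr ns e.1 - regInd nr ns e.2)

/-- The random update matrix R determined by the selected edge `e` (with `e.1 < e.2`). -/
def Rmat (nr ns : ℕ) (e : Fin (nr + ns) × Fin (nr + ns)) : Matrix (Fin nr) (Fin ns) ℝ :=
  (2⁻¹ : ℝ) • Matrix.vecMulVec (regInd nr ns e.1) (stubInd nr ns e.2)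

/-- Total edge weight α = Σ_i Σ_{j>i} a_{ij}. -/
def alphaW (nr ns : ℕ) (A : Matrix (Fin (nr + ns)) (Fin (nr + ns)) ℝ) : ℝ :=
  ∑ i : Fin (nr + ns), ∑ j : Fin (nr + ns), if (i : ℕ) < (j : ℕ) then A i j else 0

/-- The regular-to-stubborn weight matrix M̃. -/
def MtilM (nr ns : ℕ) (A : Matrix (Fin (nr + ns)) (Fin (nr + ns)) ℝ) :
    Matrix (Fin nr) (Fin ns) ℝ :=
  Matrix.of fun i j => A (Fin.castAdd ns i) (Fin.natAdd nr j)

/-- η = 1/√(r₀n). -/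
def etaV (nr : ℕ) : Fin nr → ℝ := fun _ => 1 / Real.sqrt nr

/-- ξ = [1; -1]/√(r₀n). -/
def xiV (nr : ℕ) : Fin nr → ℝ :=
  fun k => (if (k : ℕ) < nr / 2 then 1 else -1) / Real.sqrt nr

/-- Projection ηηᵀ x. -/
def projEta (nr : ℕ) (x : Fin nr → ℝ) : Fin nr → ℝ := (etaV nr ⬝ᵥ x) • etaV nr

/-- Projection ξξᵀ x. -/
def projXi (nr : ℕ) (x : Fin nr → ℝ) : Fin nr → ℝ := (xiV nr ⬝ᵥ x) • xiV nr

/-- Projection Γ x = x - ηηᵀ x - ξξᵀ x. -/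
def projGamma (nr : ℕ) (x : Fin nr → ℝ) : Fin nr → ℝ := x - projEta nr x - projXi nr x

/-- Projection x⊥ = x - ηηᵀ x. -/
def projPerp (nr : ℕ) (x : Fin nr → ℝ) : Fin nr → ℝ := x - projEta nr x

/-- Squared Euclidean norm. -/
def normSq {m : ℕ} (x : Fin m → ℝ) : ℝ := ∑ i, x i ^ 2

/-- Euclidean norm. -/
def enormV {m : ℕ} (x : Fin m → ℝ) : ℝ := Real.sqrt (normSq x)

/-- #{i : |x_i - y_i| > ε c_x}. -/
def Scard {m : ℕ} (x y : Fin m → ℝ) (ε cx : ℝ) : ℕ :=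
  (Finset.univ.filter fun i : Fin m => ε * cx < |x i - y i|).card

/-!
X(t) is a function of the first t edges, which are independent of the (t+1)-st, so the means
satisfy E{X(t+1)} = Q̄ E{X(t)} + R̄ zˢ. Writing Q̄ = I − L/(2α), the matrix L is the weighted
Laplacian of the regular agents plus l⁽ˢ⁾ I. With s = √(r₀n) ξ the ±1 community sign, the
regular weights are a_kl = ((l_s + l_d) + (l_s − l_d) s_k s_l)/2 for k ≠ l, so η, ξ and
span{η, ξ}^⊥ are eigenspaces of L with eigenvalues 2αλ₁, 2αλ₂, 2αλ₃. Projected onto them, the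
recursion splits into three affine recursions a(t+1) = (1 − λ)a(t) + b, each solved by a
geometric sum.
-/

section RandomAffineRecursion

variable {Ω E m : Type*} [Fintype m] {edge : ℕ → Ω → E} {Q : E → Matrix m m ℝ} {r : E → m → ℝ}
  {x0 : m → ℝ} {X : ℕ → Ω → m → ℝ}

theorem exists_eq_comp_history (hX0 : ∀ ω, X 0 ω = x0)
    (hXrec : ∀ t ω, X (t + 1) ω = Q (edge t ω) *ᵥ X t ω + r (edge t ω)) (t : ℕ) :
    ∃ F : (Fin t → E) → m → ℝ, ∀ ω, X t ω = F fun k => edge k ω := by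
  induction t with
  | zero => exact ⟨fun _ => x0, hX0⟩
  | succ t ih =>
    obtain ⟨F, hF⟩ := ih
    exact ⟨fun g => Q (g (Fin.last t)) *ᵥ F (fun k => g k.castSucc) + r (g (Fin.last t)),
      fun ω => by rw [hXrec, hF]; rfl⟩

variable [MeasurableSpace Ω] {P : Measure Ω} [Fintype E] [MeasurableSpace E]
  [MeasurableSingletonClass E]

theorem integral_mul_comp_history (hmeas : ∀ t, Measurable (edge t)) (hindep : iIndepFun edge P)
    (t : ℕ) (φ : E → ℝ) (ψ : (Fin t → E) → ℝ) :
    ∫ ω, φ (edge t ω) * ψ (fun k => edge k ω) ∂P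
      = (∫ ω, φ (edge t ω) ∂P) * ∫ ω, ψ (fun k => edge k ω) ∂P := by
  have hdisj : Disjoint ({t} : Finset ℕ) (Finset.range t) := by simp
  have hind : IndepFun (fun ω => φ (edge t ω)) (fun ω => ψ (fun k => edge k ω)) P :=
    (hindep.indepFun_finset {t} (Finset.range t) hdisj hmeas).comp
      (φ := fun p : ({t} : Finset ℕ) → E => φ (p ⟨t, Finset.mem_singleton_self t⟩))
      (ψ := fun p : Finset.range t → E => ψ fun k => p ⟨k, Finset.mem_range.2 k.isLt⟩)
      (measurable_of_countable _) (measurable_of_countable _)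
  exact hind.integral_mul_eq_mul_integral
    ((measurable_of_countable φ).comp (hmeas t)).aestronglyMeasurable
    ((measurable_of_countable ψ).comp
      (measurable_pi_lambda _ fun k => hmeas k)).aestronglyMeasurable

variable [IsProbabilityMeasure P]

theorem integrable_comp_of_finite {S : Type*} [Finite S] [MeasurableSpace S]
    [MeasurableSingletonClass S] {Y : Ω → S} (hY : Measurable Y) (φ : S → ℝ) :
    Integrable (fun ω => φ (Y ω)) P :=
  Integrable.of_finite.comp_measurable hY

theorem integral_comp_eq_sum {Y : Ω → E} (hY : Measurable Y) (φ : E → ℝ) :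
    ∫ ω, φ (Y ω) ∂P = ∑ e, P.real (Y ⁻¹' {e}) * φ e := by
  have := Measure.isProbabilityMeasure_map (μ := P) hY.aemeasurable
  rw [← integral_map hY.aemeasurable (measurable_of_countable φ).aestronglyMeasurable,
    integral_fintype Integrable.of_finite]
  simp [map_measureReal_apply hY (measurableSet_singleton _)]

theorem integral_succ_eq_sum (hmeas : ∀ t, Measurable (edge t)) (hindep : iIndepFun edge P)
    (hX0 : ∀ ω, X 0 ω = x0)
    (hXrec : ∀ t ω, X (t + 1) ω = Q (edge t ω) *ᵥ X t ω + r (edge t ω)) (t : ℕ) :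
    (fun i => ∫ ω, X (t + 1) ω i ∂P)
      = ∑ e, P.real (edge t ⁻¹' {e}) • (Q e *ᵥ (fun i => ∫ ω, X t ω i ∂P) + r e) := by
  obtain ⟨F, hF⟩ := exists_eq_comp_history hX0 hXrec t
  have hhist : Measurable fun ω (k : Fin t) => edge k ω := measurable_pi_lambda _ fun k => hmeas k
  have hint : ∀ φ : E × (Fin t → E) → ℝ,
      Integrable (fun ω => φ (edge t ω, fun k => edge k ω)) P :=
    integrable_comp_of_finite ((hmeas t).prodMk hhist)
  have hQX : ∀ i j, ∫ ω, Q (edge t ω) i j * F (fun k => edge k ω) j ∂P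
      = (∑ e, P.real (edge t ⁻¹' {e}) * Q e i j) * ∫ ω, F (fun k => edge k ω) j ∂P := fun i j => by
    rw [integral_mul_comp_history hmeas hindep t (fun e => Q e i j) (fun g => F g j),
      integral_comp_eq_sum (hmeas t) (fun e => Q e i j)]
  funext i
  simp_rw [hXrec, hF]
  simp only [Pi.add_apply, mulVec, dotProduct]
  rw [integral_add (integrable_finsetSum _ fun j _ => hint fun p => Q p.1 i j * F p.2 j)
      (hint fun p => r p.1 i),
    integral_finsetSum _ fun j _ => hint fun p => Q p.1 i j * F p.2 j,
    integral_comp_eq_sum (hmeas t) (fun e => r e i)]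
  simp only [hQX, Finset.sum_apply, Pi.smul_apply, Pi.add_apply, smul_eq_mul, mulVec, dotProduct,
    mul_add, Finset.sum_add_distrib, Finset.mul_sum, Finset.sum_mul]
  rw [Finset.sum_comm]
  simp only [mul_assoc]

end RandomAffineRecursion

theorem affine_recurrence_closed_form {V : Type*} [AddCommGroup V] [Module ℝ V] {a : ℕ → V}
    {l : ℝ} {b : V} (h : ∀ t, a (t + 1) = (1 - l) • a t + b) (hl : l ≠ 0 ∨ b = 0) (t : ℕ) :
    a t = (1 - l) ^ t • a 0 + ((1 / l) * (1 - (1 - l) ^ t)) • b := by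
  induction t with
  | zero => simp
  | succ t ih =>
    rw [h, ih]
    rcases hl with hl | rfl
    · have key : (1 - l) * ((1 / l) * (1 - (1 - l) ^ t)) + 1
          = (1 / l) * (1 - (1 - l) ^ (t + 1)) := by
        field_simp; ring
      rw [← key]; module
    · simp only [smul_zero, add_zero, smul_smul, pow_succ']

section Projections

variable {nr : ℕ}

/-- `xiV nr = communitySign nr / √nr`. -/
def communitySign (nr : ℕ) (k : Fin nr) : ℝ := if (k : ℕ) < nr / 2 then 1 else -1

theorem communitySign_mul_self (k : Fin nr) : communitySign nr k * communitySign nr k = 1 := by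
  unfold communitySign; split_ifs <;> norm_num

theorem communitySign_eq_iff (k l : Fin nr) :
    communitySign nr k = communitySign nr l ↔ ((k : ℕ) < nr / 2 ↔ (l : ℕ) < nr / 2) := by
  unfold communitySign; split_ifs <;> norm_num <;> tauto

theorem sum_communitySign (heven : Even nr) : ∑ k, communitySign nr k = 0 := by
  obtain ⟨m, rfl⟩ := heven
  rw [Fin.sum_univ_add]
  simp [communitySign, show (m + m) / 2 = m by omega]

theorem div_sqrt_mul_div_sqrt (a b : ℝ) (n : ℕ) : a / √n * (b / √n) = a * b / n := by
  rw [div_mul_div_comm, Real.mul_self_sqrt n.cast_nonneg]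

theorem etaV_dotProduct_etaV (h : 0 < nr) : etaV nr ⬝ᵥ etaV nr = 1 := by
  simp only [etaV, dotProduct, div_sqrt_mul_div_sqrt]
  simp [h.ne']

theorem xiV_dotProduct_xiV (h : 0 < nr) : xiV nr ⬝ᵥ xiV nr = 1 := by
  simp only [xiV, dotProduct, div_sqrt_mul_div_sqrt]
  simp [← communitySign.eq_def, communitySign_mul_self, h.ne']

theorem etaV_dotProduct_xiV (heven : Even nr) : etaV nr ⬝ᵥ xiV nr = 0 := by
  simp only [etaV, xiV, dotProduct, div_sqrt_mul_div_sqrt, ← Finset.sum_div]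
  simp [← communitySign.eq_def, sum_communitySign heven]

theorem projEta_apply (y : Fin nr → ℝ) (k : Fin nr) : projEta nr y k = (∑ l, y l) / nr := by
  simp only [projEta, etaV, dotProduct, Pi.smul_apply, smul_eq_mul, ← Finset.mul_sum]
  rw [mul_comm, ← mul_assoc, div_sqrt_mul_div_sqrt]
  ring

theorem projXi_apply (y : Fin nr → ℝ) (k : Fin nr) :
    projXi nr y k = communitySign nr k * (∑ l, communitySign nr l * y l) / nr := by
  simp only [projXi, xiV, dotProduct, Pi.smul_apply, smul_eq_mul, ← communitySign.eq_def,
    div_mul_eq_mul_div, ← Finset.sum_div]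
  rw [mul_comm, div_mul_eq_mul_div, div_div, Real.mul_self_sqrt nr.cast_nonneg]

theorem projEta_add_projXi_add_projGamma (y : Fin nr → ℝ) :
    projEta nr y + projXi nr y + projGamma nr y = y := by
  unfold projGamma; abel

theorem projEta_add (x y : Fin nr → ℝ) : projEta nr (x + y) = projEta nr x + projEta nr y := by
  simp only [projEta, dotProduct_add, add_smul]

theorem projXi_add (x y : Fin nr → ℝ) : projXi nr (x + y) = projXi nr x + projXi nr y := by
  simp only [projXi, dotProduct_add, add_smul]

theorem projGamma_add (x y : Fin nr → ℝ) :
    projGamma nr (x + y) = projGamma nr x + projGamma nr y := by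
  simp only [projGamma, projEta_add, projXi_add]; abel

theorem projEta_spectral (heven : Even nr) (h : 0 < nr) (a b c : ℝ) (y : Fin nr → ℝ) :
    projEta nr (a • projEta nr y + b • projXi nr y + c • projGamma nr y) = a • projEta nr y := by
  simp only [projGamma, projEta, projXi, dotProduct_add, dotProduct_sub, dotProduct_smul,
    etaV_dotProduct_etaV h, etaV_dotProduct_xiV heven, smul_eq_mul]
  module

theorem projXi_spectral (heven : Even nr) (h : 0 < nr) (a b c : ℝ) (y : Fin nr → ℝ) :
    projXi nr (a • projEta nr y + b • projXi nr y + c • projGamma nr y) = b • projXi nr y := by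
  simp only [projGamma, projEta, projXi, dotProduct_add, dotProduct_sub, dotProduct_smul,
    xiV_dotProduct_xiV h, dotProduct_comm (xiV nr) (etaV nr), etaV_dotProduct_xiV heven,
    smul_eq_mul]
  module

theorem projGamma_spectral (heven : Even nr) (h : 0 < nr) (a b c : ℝ) (y : Fin nr → ℝ) :
    projGamma nr (a • projEta nr y + b • projXi nr y + c • projGamma nr y)
      = c • projGamma nr y := by
  simp only [projGamma, projEta, projXi, dotProduct_add, dotProduct_sub, dotProduct_smul,
    etaV_dotProduct_etaV h, xiV_dotProduct_xiV h, dotProduct_comm (xiV nr) (etaV nr),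
    etaV_dotProduct_xiV heven, smul_eq_mul]
  module

theorem spectral_recurrence_closed_form (heven : Even nr) (h : 0 < nr) {l1 l2 l3 : ℝ}
    {mean : ℕ → Fin nr → ℝ} {u : Fin nr → ℝ}
    (hmean : ∀ t, mean (t + 1) = (1 - l1) • projEta nr (mean t) + (1 - l2) • projXi nr (mean t)
      + (1 - l3) • projGamma nr (mean t) + u)
    (hl1 : l1 ≠ 0 ∨ projEta nr u = 0) (hl2 : l2 ≠ 0) (hl3 : l3 ≠ 0) (t : ℕ) :
    mean t = (1 - l1) ^ t • projEta nr (mean 0) + ((1 / l1) * (1 - (1 - l1) ^ t)) • projEta nr u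
      + (1 - l2) ^ t • projXi nr (mean 0) + ((1 / l2) * (1 - (1 - l2) ^ t)) • projXi nr u
      + (1 - l3) ^ t • projGamma nr (mean 0)
      + ((1 / l3) * (1 - (1 - l3) ^ t)) • projGamma nr u := by
  rw [← projEta_add_projXi_add_projGamma (mean t),
    affine_recurrence_closed_form (a := fun t => projEta nr (mean t))
      (fun t => by rw [hmean, projEta_add, projEta_spectral heven h]) hl1,
    affine_recurrence_closed_form (a := fun t => projXi nr (mean t))
      (fun t => by rw [hmean, projXi_add, projXi_spectral heven h]) (.inl hl2),
    affine_recurrence_closed_form (a := fun t => projGamma nr (mean t))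
      (fun t => by rw [hmean, projGamma_add, projGamma_spectral heven h]) (.inl hl3)]
  abel

end Projections

def edgeWeight {ι : Type*} [LinearOrder ι] (A : Matrix ι ι ℝ) (v : ι × ι) : ℝ :=
  if v.1 < v.2 then A v.1 v.2 else 0

theorem Matrix.IsSymm.sum_edgeWeight_mul_incidence {ι : Type*} [Fintype ι] [LinearOrder ι]
    {A : Matrix ι ι ℝ} (hA : A.IsSymm) (D : ι → ℝ) (k : ι) :
    ∑ v : ι × ι, edgeWeight A v *
        ((D v.1 - D v.2) * ((if v.1 = k then 1 else 0) - (if v.2 = k then 1 else 0)))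
      = ∑ j, A k j * (D k - D j) := by
  have hsplit : ∀ i j, edgeWeight A (i, j) *
      ((D i - D j) * ((if i = k then 1 else 0) - (if j = k then 1 else 0)))
      = (if i = k then edgeWeight A (i, j) * (D i - D j) else 0)
        - (if j = k then edgeWeight A (i, j) * (D i - D j) else 0) := by
    intro i j; split_ifs <;> ring
  have hterm : ∀ j, edgeWeight A (k, j) * (D k - D j) - edgeWeight A (j, k) * (D j - D k)
      = A k j * (D k - D j) := by
    intro j
    rcases lt_trichotomy k j with h | rfl | h
    · simp [edgeWeight, h, h.not_gt]
    · simp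
    · simp only [edgeWeight, h, h.not_gt, if_true, if_false, hA.apply k j]; ring
  simp only [Fintype.sum_prod_type, hsplit, Finset.sum_sub_distrib, Finset.sum_ite_eq',
    Finset.mem_univ, if_true, Finset.sum_ite_irrel, Finset.sum_const_zero]
  rw [← Finset.sum_sub_distrib]
  exact Finset.sum_congr rfl fun j _ => hterm j

theorem sum_edgeWeight_pos {ι : Type*} [Fintype ι] [LinearOrder ι] {A : Matrix ι ι ℝ}
    (hnonneg : ∀ i j, i < j → 0 ≤ A i j) {i j : ι} (hij : i < j) (hpos : 0 < A i j) :
    0 < ∑ v, edgeWeight A v :=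
  Finset.sum_pos'
    (fun v _ => by unfold edgeWeight; split_ifs with h; exacts [hnonneg _ _ h, le_rfl])
    ⟨(i, j), Finset.mem_univ _, by simpa [edgeWeight, hij] using hpos⟩

theorem measureReal_edge_eq {ι Ω : Type*} [LinearOrder ι] [MeasurableSpace Ω] {P : Measure Ω}
    {A : Matrix ι ι ℝ} {α : ℝ} {edge : ℕ → Ω → ι × ι} (hlt : ∀ t ω, (edge t ω).1 < (edge t ω).2)
    (hdist : ∀ t i j, i < j → P {ω | edge t ω = (i, j)} = ENNReal.ofReal (A i j / α))
    (hnonneg : ∀ i j, i < j → 0 ≤ A i j) (hα : 0 ≤ α) (t : ℕ) (v : ι × ι) :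
    P.real (edge t ⁻¹' {v}) = edgeWeight A v / α := by
  by_cases hv : v.1 < v.2
  · rw [measureReal_def, show edge t ⁻¹' {v} = {ω | edge t ω = (v.1, v.2)} from rfl,
      hdist t _ _ hv, ENNReal.toReal_ofReal (div_nonneg (hnonneg _ _ hv) hα), edgeWeight,
      if_pos hv]
  · have hempty : edge t ⁻¹' {v} = ∅ :=
      Set.eq_empty_of_forall_notMem fun ω hω => hv (hω ▸ hlt t ω)
    rw [hempty, measureReal_empty, edgeWeight, if_neg hv, zero_div]

theorem Fin.sum_filter_le_eq_sum_natAdd {M : Type*} [AddCommMonoid M] {m n : ℕ}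
    (f : Fin (m + n) → M) :
    ∑ j ∈ Finset.univ.filter (fun j : Fin (m + n) => m ≤ (j : ℕ)), f j
      = ∑ s, f (Fin.natAdd m s) := by
  simp [Finset.sum_filter, Fin.sum_univ_add, Finset.sum_eq_zero, Nat.not_le.2 (Fin.is_lt _)]

section ExpectedUpdate

variable {nr ns : ℕ}

theorem alphaW_eq_sum_edgeWeight (A : Matrix (Fin (nr + ns)) (Fin (nr + ns)) ℝ) :
    alphaW nr ns A = ∑ v, edgeWeight A v := by
  rw [Fintype.sum_prod_type]; rfl

theorem regInd_castAdd (k : Fin nr) : regInd nr ns (Fin.castAdd ns k) = Pi.single k 1 := by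
  ext l; simp [regInd, Pi.single_apply, Fin.ext_iff]

theorem regInd_natAdd (s : Fin ns) : regInd nr ns (Fin.natAdd nr s) = 0 := by
  ext l; simp [regInd]; omega

theorem stubInd_castAdd (k : Fin nr) : stubInd nr ns (Fin.castAdd ns k) = 0 := by
  ext l; simp [stubInd]; omega

theorem stubInd_natAdd (s : Fin ns) : stubInd nr ns (Fin.natAdd nr s) = Pi.single s 1 := by
  ext l; simp [stubInd, Pi.single_apply, Fin.ext_iff, add_comm]

theorem regInd_dotProduct (i : Fin (nr + ns)) (y : Fin nr → ℝ) :
    regInd nr ns i ⬝ᵥ y = Fin.append y 0 i := by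
  induction i using Fin.addCases <;> simp [regInd_castAdd, regInd_natAdd]

theorem regInd_apply (i : Fin (nr + ns)) (k : Fin nr) :
    regInd nr ns i k = if i = Fin.castAdd ns k then 1 else 0 := by
  simp [regInd, Fin.ext_iff, eq_comm]

/-- The weighted Laplacian of the whole graph applied to `y` extended by `0` on the stubborn
agents, read off on the regular ones. -/
def regLaplacian (nr ns : ℕ) (A : Matrix (Fin (nr + ns)) (Fin (nr + ns)) ℝ)
    (y : Fin nr → ℝ) : Fin nr → ℝ :=
  fun k => ∑ j, A (Fin.castAdd ns k) j * (y k - Fin.append y 0 j)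

theorem Qmat_mulVec (v : Fin (nr + ns) × Fin (nr + ns)) (y : Fin nr → ℝ) :
    Qmat nr ns v *ᵥ y = y - (2⁻¹ * ((regInd nr ns v.1 - regInd nr ns v.2) ⬝ᵥ y)) •
      (regInd nr ns v.1 - regInd nr ns v.2) := by
  rw [Qmat, sub_mulVec, one_mulVec, smul_mulVec, vecMulVec_mulVec, op_smul_eq_smul, smul_smul]

theorem Rmat_mulVec (v : Fin (nr + ns) × Fin (nr + ns)) (zs : Fin ns → ℝ) :
    Rmat nr ns v *ᵥ zs = (2⁻¹ * (stubInd nr ns v.2 ⬝ᵥ zs)) • regInd nr ns v.1 := by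
  rw [Rmat, smul_mulVec, vecMulVec_mulVec, op_smul_eq_smul, smul_smul]

variable {A : Matrix (Fin (nr + ns)) (Fin (nr + ns)) ℝ}

theorem sum_edgeWeight_smul_Qmat_mulVec (hA : A.IsSymm) (y : Fin nr → ℝ) :
    ∑ v, edgeWeight A v • (Qmat nr ns v *ᵥ y)
      = alphaW nr ns A • y - (2⁻¹ : ℝ) • regLaplacian nr ns A y := by
  funext k
  have hinc := hA.sum_edgeWeight_mul_incidence (Fin.append y 0) (Fin.castAdd ns k)
  simp only [Fin.append_left] at hinc
  simp only [Finset.sum_apply, Pi.smul_apply, Pi.sub_apply, smul_eq_mul, Qmat_mulVec,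
    sub_dotProduct, regInd_dotProduct, regInd_apply, alphaW_eq_sum_edgeWeight, Finset.sum_mul,
    regLaplacian, ← hinc, Finset.mul_sum, ← Finset.sum_sub_distrib]
  refine Finset.sum_congr rfl fun v _ => ?_
  ring

theorem sum_edgeWeight_smul_Rmat_mulVec (zs : Fin ns → ℝ) :
    ∑ v, edgeWeight A v • (Rmat nr ns v *ᵥ zs) = (2⁻¹ : ℝ) • (MtilM nr ns A *ᵥ zs) := by
  funext k
  simp only [Rmat_mulVec, Finset.sum_apply, Pi.smul_apply, smul_eq_mul, Fintype.sum_prod_type,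
    Fin.sum_univ_add, stubInd_castAdd, zero_dotProduct, mul_zero, zero_mul, sum_const_zero,
    stubInd_natAdd, single_dotProduct, one_mul, zero_add, regInd_castAdd, Pi.single_apply, mul_ite,
    mul_one, sum_ite_irrel, sum_ite_eq, mem_univ, if_true, regInd_natAdd, Pi.zero_apply, add_zero]
  have hlt : ∀ s : Fin ns, Fin.castAdd ns k < Fin.natAdd nr s := fun s => by
    simp only [Fin.lt_def, Fin.val_castAdd, Fin.val_natAdd]; omega
  simp [edgeWeight, hlt, MtilM, mulVec, dotProduct, Finset.mul_sum, mul_left_comm]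

theorem ite_communitySign_eq (a b : ℝ) (k l : Fin nr) :
    (if communitySign nr k = communitySign nr l then a else b)
      = ((a + b) + (a - b) * (communitySign nr k * communitySign nr l)) / 2 := by
  unfold communitySign; split_ifs <;> norm_num at * <;> ring

theorem regLaplacian_apply_eq {lsr ldr ls : ℝ}
    (hblock : ∀ k l : Fin nr, k ≠ l → A (Fin.castAdd ns k) (Fin.castAdd ns l)
      = if communitySign nr k = communitySign nr l then lsr else ldr)
    (hrow : ∀ k : Fin nr, ∑ s, A (Fin.castAdd ns k) (Fin.natAdd nr s) = ls)
    (y : Fin nr → ℝ) (k : Fin nr) :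
    regLaplacian nr ns A y k = ls * y k
      + ∑ l, ((lsr + ldr) + (lsr - ldr) * (communitySign nr k * communitySign nr l)) / 2
        * (y k - y l) := by
  have hreg : ∀ l, A (Fin.castAdd ns k) (Fin.castAdd ns l) * (y k - y l)
      = ((lsr + ldr) + (lsr - ldr) * (communitySign nr k * communitySign nr l)) / 2
        * (y k - y l) := by
    intro l
    rcases eq_or_ne k l with rfl | hkl
    · simp
    · rw [hblock k l hkl, ite_communitySign_eq]
  simp only [regLaplacian, Fin.sum_univ_add, Fin.append_left, Fin.append_right, Pi.zero_apply,
    sub_zero, ← Finset.sum_mul, hrow, hreg]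
  ring

theorem regLaplacian_eq {lsr ldr ls : ℝ} (heven : Even nr) (h : 0 < nr)
    (hblock : ∀ k l : Fin nr, k ≠ l → A (Fin.castAdd ns k) (Fin.castAdd ns l)
      = if communitySign nr k = communitySign nr l then lsr else ldr)
    (hrow : ∀ k : Fin nr, ∑ s, A (Fin.castAdd ns k) (Fin.natAdd nr s) = ls)
    (y : Fin nr → ℝ) :
    regLaplacian nr ns A y = ls • projEta nr y + (ldr * nr + ls) • projXi nr y
      + ((lsr + ldr) * nr / 2 + ls) • projGamma nr y := by
  funext k
  have hterm : ∀ l,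
      ((lsr + ldr) + (lsr - ldr) * (communitySign nr k * communitySign nr l)) / 2 * (y k - y l)
      = (lsr + ldr) / 2 * y k - (lsr + ldr) / 2 * y l
        + (lsr - ldr) / 2 * communitySign nr k * y k * communitySign nr l
        - (lsr - ldr) / 2 * communitySign nr k * (communitySign nr l * y l) := by
    intro l; ring
  have hnr : (nr : ℝ) ≠ 0 := by positivity
  simp only [regLaplacian_apply_eq hblock hrow, hterm, Finset.sum_add_distrib,
    Finset.sum_sub_distrib, ← Finset.mul_sum, sum_communitySign heven, Finset.sum_const,
    Finset.card_univ, Fintype.card_fin, nsmul_eq_mul, projGamma, Pi.add_apply, Pi.smul_apply,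
    Pi.sub_apply, projEta_apply, projXi_apply, smul_eq_mul]
  field_simp
  ring

theorem sum_edgeWeight_div_smul_Qmat_add_Rmat {lsr ldr ls l1 l2 l3 : ℝ} (hA : A.IsSymm)
    (heven : Even nr) (h : 0 < nr)
    (hblock : ∀ k l : Fin nr, k ≠ l → A (Fin.castAdd ns k) (Fin.castAdd ns l)
      = if communitySign nr k = communitySign nr l then lsr else ldr)
    (hrow : ∀ k : Fin nr, ∑ s, A (Fin.castAdd ns k) (Fin.natAdd nr s) = ls)
    (hα : alphaW nr ns A ≠ 0)
    (hl1 : l1 = ls / (2 * alphaW nr ns A))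
    (hl2 : l2 = (ldr * (nr : ℝ) + ls) / (2 * alphaW nr ns A))
    (hl3 : l3 = ((lsr + ldr) * (nr : ℝ) / 2 + ls) / (2 * alphaW nr ns A))
    (y : Fin nr → ℝ) (zs : Fin ns → ℝ) :
    ∑ v, (edgeWeight A v / alphaW nr ns A) • (Qmat nr ns v *ᵥ y + Rmat nr ns v *ᵥ zs)
      = (1 - l1) • projEta nr y + (1 - l2) • projXi nr y + (1 - l3) • projGamma nr y
        + (2 * alphaW nr ns A)⁻¹ • (MtilM nr ns A *ᵥ zs) := by
  simp only [div_eq_inv_mul, mul_smul, ← Finset.smul_sum, smul_add, Finset.sum_add_distrib,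
    sum_edgeWeight_smul_Qmat_mulVec hA, sum_edgeWeight_smul_Rmat_mulVec,
    regLaplacian_eq heven h hblock hrow]
  funext k
  simp only [projGamma, Pi.add_apply, Pi.smul_apply, Pi.sub_apply, smul_eq_mul, hl1, hl2, hl3]
  field_simp
  ring

end ExpectedUpdate

section TwoCommunityWeights

variable {nr ns : ℕ} {A : Matrix (Fin (nr + ns)) (Fin (nr + ns)) ℝ} {lsr ldr : ℝ}

theorem regular_entry_pos (hlsr : 0 < lsr) (hldr : 0 < ldr)
    (hA_same : ∀ i j : Fin (nr + ns), i ≠ j → (i : ℕ) < nr → (j : ℕ) < nr →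
      (((i : ℕ) < nr / 2) ↔ ((j : ℕ) < nr / 2)) → A i j = lsr)
    (hA_diff : ∀ i j : Fin (nr + ns), (i : ℕ) < nr → (j : ℕ) < nr →
      ¬(((i : ℕ) < nr / 2) ↔ ((j : ℕ) < nr / 2)) → A i j = ldr)
    {i j : Fin (nr + ns)} (hij : i ≠ j) (hi : (i : ℕ) < nr) (hj : (j : ℕ) < nr) : 0 < A i j := by
  by_cases hc : (i : ℕ) < nr / 2 ↔ (j : ℕ) < nr / 2
  · rw [hA_same i j hij hi hj hc]; exact hlsr
  · rw [hA_diff i j hi hj hc]; exact hldr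

theorem entry_nonneg_of_lt (hlsr : 0 < lsr) (hldr : 0 < ldr)
    (hA_same : ∀ i j : Fin (nr + ns), i ≠ j → (i : ℕ) < nr → (j : ℕ) < nr →
      (((i : ℕ) < nr / 2) ↔ ((j : ℕ) < nr / 2)) → A i j = lsr)
    (hA_diff : ∀ i j : Fin (nr + ns), (i : ℕ) < nr → (j : ℕ) < nr →
      ¬(((i : ℕ) < nr / 2) ↔ ((j : ℕ) < nr / 2)) → A i j = ldr)
    (hA_stub : ∀ i j : Fin (nr + ns), (i : ℕ) < nr → nr ≤ (j : ℕ) → 0 ≤ A i j)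
    (hA_ss : ∀ i j : Fin (nr + ns), nr ≤ (i : ℕ) → nr ≤ (j : ℕ) → A i j = 0)
    {i j : Fin (nr + ns)} (hij : i < j) : 0 ≤ A i j := by
  rcases lt_or_ge (i : ℕ) nr with hi | hi
  · rcases lt_or_ge (j : ℕ) nr with hj | hj
    · exact (regular_entry_pos hlsr hldr hA_same hA_diff hij.ne hi hj).le
    · exact hA_stub i j hi hj
  · rw [hA_ss i j hi (hi.trans (Fin.lt_def.1 hij).le)]

theorem block_entry_eq
    (hA_same : ∀ i j : Fin (nr + ns), i ≠ j → (i : ℕ) < nr → (j : ℕ) < nr →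
      (((i : ℕ) < nr / 2) ↔ ((j : ℕ) < nr / 2)) → A i j = lsr)
    (hA_diff : ∀ i j : Fin (nr + ns), (i : ℕ) < nr → (j : ℕ) < nr →
      ¬(((i : ℕ) < nr / 2) ↔ ((j : ℕ) < nr / 2)) → A i j = ldr)
    (k l : Fin nr) (hkl : k ≠ l) :
    A (Fin.castAdd ns k) (Fin.castAdd ns l)
      = if communitySign nr k = communitySign nr l then lsr else ldr := by
  split_ifs with hc
  · exact hA_same _ _ ((Fin.castAdd_injective _ _).ne hkl) k.isLt l.isLt
      ((communitySign_eq_iff k l).1 hc)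
  · exact hA_diff _ _ k.isLt l.isLt (mt (communitySign_eq_iff k l).2 hc)

theorem alphaW_pos (hnr : 1 < nr) (hlsr : 0 < lsr) (hldr : 0 < ldr)
    (hA_same : ∀ i j : Fin (nr + ns), i ≠ j → (i : ℕ) < nr → (j : ℕ) < nr →
      (((i : ℕ) < nr / 2) ↔ ((j : ℕ) < nr / 2)) → A i j = lsr)
    (hA_diff : ∀ i j : Fin (nr + ns), (i : ℕ) < nr → (j : ℕ) < nr →
      ¬(((i : ℕ) < nr / 2) ↔ ((j : ℕ) < nr / 2)) → A i j = ldr)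
    (hnonneg : ∀ i j : Fin (nr + ns), i < j → 0 ≤ A i j) : 0 < alphaW nr ns A := by
  rw [alphaW_eq_sum_edgeWeight]
  exact sum_edgeWeight_pos hnonneg (i := ⟨0, by omega⟩) (j := ⟨1, by omega⟩) (by simp [Fin.lt_def])
    (regular_entry_pos hlsr hldr hA_same hA_diff (by simp [Fin.ext_iff]) (by simp; omega)
      (by simp; omega))

theorem MtilM_eq_zero_of_sum_eq_zero
    (hnonneg : ∀ k s, 0 ≤ A (Fin.castAdd ns k) (Fin.natAdd nr s))
    (hrow : ∀ k, ∑ s, A (Fin.castAdd ns k) (Fin.natAdd nr s) = 0) : MtilM nr ns A = 0 := by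
  ext k s
  exact (Finset.sum_eq_zero_iff_of_nonneg fun s _ => hnonneg k s).1 (hrow k) s (Finset.mem_univ s)

end TwoCommunityWeights

theorem gossip_expectation_formula_general
    (nr ns : ℕ) (hnr_even : Even nr) (hnr_pos : 0 < nr)
    (A : Matrix (Fin (nr + ns)) (Fin (nr + ns)) ℝ)
    (hA_symm : A.IsSymm)
    (lsr ldr ls : ℝ)
    (hlsr : lsr ∈ Set.Ioo (0 : ℝ) 1) (hldr : ldr ∈ Set.Ioo (0 : ℝ) 1)
    (hls_nonneg : 0 ≤ ls)
    (hA_same : ∀ i j : Fin (nr + ns), i ≠ j → (i : ℕ) < nr → (j : ℕ) < nr →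
      (((i : ℕ) < nr / 2) ↔ ((j : ℕ) < nr / 2)) → A i j = lsr)
    (hA_diff : ∀ i j : Fin (nr + ns), (i : ℕ) < nr → (j : ℕ) < nr →
      ¬(((i : ℕ) < nr / 2) ↔ ((j : ℕ) < nr / 2)) → A i j = ldr)
    (hA_stub : ∀ i j : Fin (nr + ns), (i : ℕ) < nr → nr ≤ (j : ℕ) →
      A i j ∈ Set.Ico (0 : ℝ) 1)
    (hA_ss : ∀ i j : Fin (nr + ns), nr ≤ (i : ℕ) → nr ≤ (j : ℕ) → A i j = 0)
    (hA_rowsum : ∀ i : Fin (nr + ns), (i : ℕ) < nr →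
      (∑ j ∈ Finset.univ.filter (fun j : Fin (nr + ns) => nr ≤ (j : ℕ)), A i j) = ls)
    (Ω : Type) [MeasurableSpace Ω] (P : Measure Ω) [IsProbabilityMeasure P]
    (edge : ℕ → Ω → Fin (nr + ns) × Fin (nr + ns))
    (hmeas : ∀ t, Measurable (edge t))
    (hlt : ∀ t ω, (edge t ω).1 < (edge t ω).2)
    (hdist : ∀ (t : ℕ) (i j : Fin (nr + ns)), i < j →
      P {ω | edge t ω = (i, j)} = ENNReal.ofReal (A i j / alphaW nr ns A))
    (hindep : iIndepFun edge P)
    (x0 : Fin nr → ℝ) (zs : Fin ns → ℝ)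
    (X : ℕ → Ω → Fin nr → ℝ)
    (hX0 : ∀ ω, X 0 ω = x0)
    (hXrec : ∀ t ω, X (t + 1) ω =
      Qmat nr ns (edge t ω) *ᵥ X t ω + Rmat nr ns (edge t ω) *ᵥ zs)
    (l1 : ℝ) (hl1 : l1 = ls / (2 * alphaW nr ns A))
    (l2 : ℝ) (hl2 : l2 = (ldr * (nr : ℝ) + ls) / (2 * alphaW nr ns A))
    (l3 : ℝ) (hl3 : l3 = ((lsr + ldr) * (nr : ℝ) / 2 + ls) / (2 * alphaW nr ns A))
    :
    ∀ t : ℕ,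
      (fun i => ∫ ω, X t ω i ∂P) =
        (1 - l1) ^ t • projEta nr x0 +
        ((1 / l1) * (1 - (1 - l1) ^ t)) •
          projEta nr ((2 * alphaW nr ns A)⁻¹ • (MtilM nr ns A *ᵥ zs)) +
        (1 - l2) ^ t • projXi nr x0 +
        ((1 / l2) * (1 - (1 - l2) ^ t)) •
          projXi nr ((2 * alphaW nr ns A)⁻¹ • (MtilM nr ns A *ᵥ zs)) +
        (1 - l3) ^ t • projGamma nr x0 +
        ((1 / l3) * (1 - (1 - l3) ^ t)) •
          projGamma nr ((2 * alphaW nr ns A)⁻¹ • (MtilM nr ns A *ᵥ zs)) := by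
  have hblock := block_entry_eq hA_same hA_diff
  have hrow : ∀ k : Fin nr, ∑ s, A (Fin.castAdd ns k) (Fin.natAdd nr s) = ls := fun k => by
    rw [← Fin.sum_filter_le_eq_sum_natAdd, hA_rowsum _ k.isLt]
  have hstub : ∀ i j : Fin (nr + ns), (i : ℕ) < nr → nr ≤ (j : ℕ) → 0 ≤ A i j :=
    fun i j hi hj => (hA_stub i j hi hj).1
  have hnonneg : ∀ i j : Fin (nr + ns), i < j → 0 ≤ A i j :=
    fun i j => entry_nonneg_of_lt hlsr.1 hldr.1 hA_same hA_diff hstub hA_ss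
  have hα : 0 < alphaW nr ns A :=
    alphaW_pos (by obtain ⟨m, rfl⟩ := hnr_even; omega) hlsr.1 hldr.1 hA_same hA_diff hnonneg
  have hmean : ∀ t, (fun i => ∫ ω, X (t + 1) ω i ∂P)
      = (1 - l1) • projEta nr (fun i => ∫ ω, X t ω i ∂P)
        + (1 - l2) • projXi nr (fun i => ∫ ω, X t ω i ∂P)
        + (1 - l3) • projGamma nr (fun i => ∫ ω, X t ω i ∂P)
        + (2 * alphaW nr ns A)⁻¹ • (MtilM nr ns A *ᵥ zs) := fun t => by
    rw [integral_succ_eq_sum (r := fun e => Rmat nr ns e *ᵥ zs) hmeas hindep hX0 hXrec t]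
    simp only [measureReal_edge_eq hlt hdist hnonneg hα.le]
    exact sum_edgeWeight_div_smul_Qmat_add_Rmat hA_symm hnr_even hnr_pos hblock hrow hα.ne' hl1 hl2
      hl3 _ zs
  -- if l^{(s)} = 0 then λ1 = 0 and `1 / λ1` is junk, but then M̃ = 0 kills that term
  have hl1u : l1 ≠ 0 ∨ projEta nr ((2 * alphaW nr ns A)⁻¹ • (MtilM nr ns A *ᵥ zs)) = 0 := by
    rcases eq_or_ne ls 0 with rfl | hls
    · right
      simp [MtilM_eq_zero_of_sum_eq_zero (fun k s => hstub _ _ k.isLt (by simp)) hrow, projEta]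
    · left; rw [hl1]; exact div_ne_zero hls (by positivity)
  have hl2 : l2 ≠ 0 := by rw [hl2]; have := hldr.1; positivity
  have hl3 : l3 ≠ 0 := by rw [hl3]; have := hlsr.1; have := hldr.1; positivity
  intro t
  rw [spectral_recurrence_closed_form (mean := fun t i => ∫ ω, X t ω i ∂P) hnr_even hnr_pos hmean
    hl1u hl2 hl3 t]
  simp [hX0]

theorem gossip_expectation_formula
    (nr ns : ℕ) (hnr_even : Even nr) (hnr_pos : 0 < nr) (hns_pos : 0 < ns)
    (A : Matrix (Fin (nr + ns)) (Fin (nr + ns)) ℝ)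
    (hA_symm : A.IsSymm) (hA_diag : ∀ i, A i i = 0)
    (lsr ldr ls : ℝ)
    (hlsr : lsr ∈ Set.Ioo (0 : ℝ) 1) (hldr : ldr ∈ Set.Ioo (0 : ℝ) 1)
    (hls_nonneg : 0 ≤ ls)
    (hA_same : ∀ i j : Fin (nr + ns), i ≠ j → (i : ℕ) < nr → (j : ℕ) < nr →
      (((i : ℕ) < nr / 2) ↔ ((j : ℕ) < nr / 2)) → A i j = lsr)
    (hA_diff : ∀ i j : Fin (nr + ns), (i : ℕ) < nr → (j : ℕ) < nr →
      ¬(((i : ℕ) < nr / 2) ↔ ((j : ℕ) < nr / 2)) → A i j = ldr)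
    (hA_stub : ∀ i j : Fin (nr + ns), (i : ℕ) < nr → nr ≤ (j : ℕ) →
      A i j ∈ Set.Ico (0 : ℝ) 1)
    (hA_ss : ∀ i j : Fin (nr + ns), nr ≤ (i : ℕ) → nr ≤ (j : ℕ) → A i j = 0)
    (hA_rowsum : ∀ i : Fin (nr + ns), (i : ℕ) < nr →
      (∑ j ∈ Finset.univ.filter (fun j : Fin (nr + ns) => nr ≤ (j : ℕ)), A i j) = ls)
    (Ω : Type) [MeasurableSpace Ω] (P : Measure Ω) [IsProbabilityMeasure P]
    (edge : ℕ → Ω → Fin (nr + ns) × Fin (nr + ns))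
    (hmeas : ∀ t, Measurable (edge t))
    (hlt : ∀ t ω, (edge t ω).1 < (edge t ω).2)
    (hdist : ∀ (t : ℕ) (i j : Fin (nr + ns)), i < j →
      P {ω | edge t ω = (i, j)} = ENNReal.ofReal (A i j / alphaW nr ns A))
    (hindep : iIndepFun edge P)
    (x0 : Fin nr → ℝ) (zs : Fin ns → ℝ)
    (X : ℕ → Ω → Fin nr → ℝ)
    (hX0 : ∀ ω, X 0 ω = x0)
    (hXrec : ∀ t ω, X (t + 1) ω =
      Qmat nr ns (edge t ω) *ᵥ X t ω + Rmat nr ns (edge t ω) *ᵥ zs)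
    (l1 : ℝ) (hl1 : l1 = ls / (2 * alphaW nr ns A))
    (l2 : ℝ) (hl2 : l2 = (ldr * (nr : ℝ) + ls) / (2 * alphaW nr ns A))
    (l3 : ℝ) (hl3 : l3 = ((lsr + ldr) * (nr : ℝ) / 2 + ls) / (2 * alphaW nr ns A))
    :
    ∀ t : ℕ,
      (fun i => ∫ ω, X t ω i ∂P) =
        (1 - l1) ^ t • projEta nr x0 +
        ((1 / l1) * (1 - (1 - l1) ^ t)) •
          projEta nr ((2 * alphaW nr ns A)⁻¹ • (MtilM nr ns A *ᵥ zs)) +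
        (1 - l2) ^ t • projXi nr x0 +
        ((1 / l2) * (1 - (1 - l2) ^ t)) •
          projXi nr ((2 * alphaW nr ns A)⁻¹ • (MtilM nr ns A *ᵥ zs)) +
        (1 - l3) ^ t • projGamma nr x0 +
        ((1 / l3) * (1 - (1 - l3) ^ t)) •
          projGamma nr ((2 * alphaW nr ns A)⁻¹ • (MtilM nr ns A *ᵥ zs)) :=
  gossip_expectation_formula_general nr ns hnr_even hnr_pos A hA_symm lsr ldr ls hlsr hldr
    hls_nonneg hA_same hA_diff hA_stub hA_ss hA_rowsum Ω P edge hmeas hlt hdist hindep x0 zs X hX0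
    hXrec l1 hl1 l2 hl2 l3 hl3

end
end

section
/- Under the gossip model setup, the one-step update matrix Q(0) satisfies the identity E{Q(0)^T ξξ^T Q(0)} = (1 − 2λ2)·ξξ^T + (λ1/(2 r0 n))·I_{r0 n} + (2(λ2 − λ1)/(r0 n))·(ξξ^T + Γ/2), where Γ := I_{r0 n} − ηη^T − ξξ^T. -/
open MeasureTheory ProbabilityTheory Matrix Finset Filter

set_option autoImplicit false
set_option linter.unusedVariables false

noncomputable section

/-! The update is `Q = I - ½ ddᵀ` with `d = eᵢ - eⱼ` (just `d = eᵢ` when `j` is stubborn), so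
`Qᵀξξᵀ Q = yyᵀ` with `y = ξ - ½ (x̃ᵢ - x̃ⱼ) d`, where `x̃` extends `ξ` by zero to the stubborn
agents. Averaging over the edge, the term linear in `d` becomes the grounded Laplacian applied
to `ξ`, and `ξ` is an eigenvector of it with eigenvalue `l_d n_r + l_s = 2αλ₂`: `ξ` is constant
inside a community, the weight across communities is `l_d`, and the communities have equal
size. The term quadratic in `d` averages to a multiple of the matrix with diagonal entries
`Σₘ aₖₘ (x̃ₖ - x̃ₘ)² = 2 l_d + l_s / n_r` and off-diagonal entries
`-aₖₗ (ξₖ - ξₗ)² = -2 l_d (1 / n_r - ξₖ ξₗ)`, a combination of `I`, `ηηᵀ` and `ξξᵀ`. -/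

namespace Finset

variable {V R : Type*} [Fintype V] [CommRing R]

theorem sum_sum_eq_two_mul_sum_sum_ite_lt [LinearOrder V] (f : V → V → R)
    (hf : ∀ i j, f j i = f i j) (hdiag : ∀ i, f i i = 0) :
    ∑ i, ∑ j, f i j = 2 * ∑ i, ∑ j, if i < j then f i j else 0 := by
  have hsplit : ∀ i j, f i j = (if i < j then f i j else 0) + (if j < i then f j i else 0) := by
    intro i j
    rcases lt_trichotomy i j with h | rfl | h
    · simp [h, h.not_gt]
    · simp [hdiag]
    · simp [h, h.not_gt, hf]
  conv_lhs => enter [2, i, 2, j]; rw [hsplit]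
  simp only [Finset.sum_add_distrib]
  rw [Finset.sum_comm (f := fun i j => if j < i then f j i else 0), two_mul]

variable [DecidableEq V]

theorem sum_sum_mul_ite_sub_ite (h : V → V → R) (hh : ∀ i j, h j i = -h i j) (v : V) :
    ∑ i, ∑ j, h i j * ((if i = v then 1 else 0) - (if j = v then 1 else 0)) =
      2 * ∑ j, h v j := by
  simp only [mul_sub, mul_ite, mul_one, mul_zero, Finset.sum_sub_distrib]
  rw [Finset.sum_comm (f := fun i j => if i = v then h i j else 0)]
  simp only [Finset.sum_ite_eq', Finset.mem_univ, if_true]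
  rw [two_mul, sub_eq_add_neg, ← Finset.sum_neg_distrib]
  simp only [← hh]

theorem sum_sum_mul_ite_sub_ite_mul (h : V → V → R) (hh : ∀ i j, h j i = h i j) (u v : V) :
    ∑ i, ∑ j, h i j * (((if i = u then 1 else 0) - (if j = u then 1 else 0)) *
      ((if i = v then 1 else 0) - (if j = v then 1 else 0))) =
      2 * ((if u = v then ∑ j, h u j else 0) - h u v) := by
  have key := sum_sum_mul_ite_sub_ite
    (fun i j => h i j * ((if i = u then 1 else 0) - (if j = u then 1 else 0)))
    (fun i j => by rw [hh]; ring) v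
  simp only [mul_assoc] at key
  rw [key]
  simp only [mul_sub, mul_ite, mul_one, mul_zero, Finset.sum_sub_distrib, Finset.sum_ite_eq',
    Finset.mem_univ, if_true]
  rcases eq_or_ne u v with rfl | huv
  · simp
  · simp [huv, huv.symm, hh]

end Finset

namespace MeasureTheory

theorem integral_comp_eq_sum_measureReal {Ω E : Type*} [MeasurableSpace Ω] (P : Measure Ω)
    [IsFiniteMeasure P] [Fintype E] [MeasurableSpace E] [MeasurableSingletonClass E]
    {X : Ω → E} (hX : Measurable X) (f : E → ℝ) :
    ∫ ω, f (X ω) ∂P = ∑ e, P.real (X ⁻¹' {e}) * f e := by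
  rw [← integral_map hX.aemeasurable (measurable_of_finite f).aestronglyMeasurable,
    integral_fintype .of_finite]
  simp [map_measureReal_apply hX (measurableSet_singleton _)]

theorem integral_comp_eq_sum_sum_ite_lt {Ω V : Type*} [MeasurableSpace Ω] (P : Measure Ω)
    [IsFiniteMeasure P] [Fintype V] [LinearOrder V] [MeasurableSpace V]
    [MeasurableSingletonClass V] {X : Ω → V × V} (hX : Measurable X)
    (hlt : ∀ ω, (X ω).1 < (X ω).2) (w : V → V → ℝ) (hw : ∀ i j, i < j → 0 ≤ w i j)
    (hdist : ∀ i j, i < j → P {ω | X ω = (i, j)} = ENNReal.ofReal (w i j)) (f : V × V → ℝ) :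
    ∫ ω, f (X ω) ∂P = ∑ i, ∑ j, if i < j then w i j * f (i, j) else 0 := by
  rw [integral_comp_eq_sum_measureReal P hX, Fintype.sum_prod_type]
  refine Finset.sum_congr rfl fun i _ => Finset.sum_congr rfl fun j _ => ?_
  split_ifs with hij
  · simp only [measureReal_def, Set.preimage, Set.mem_singleton_iff]
    rw [hdist i j hij, ENNReal.toReal_ofReal (hw i j hij)]
  · have hempty : X ⁻¹' {(i, j)} = ∅ :=
      Set.eq_empty_of_forall_notMem fun ω hω =>
        hij (by simpa [Set.mem_singleton_iff.1 hω] using hlt ω)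
    simp [hempty]

end MeasureTheory

namespace Matrix

variable {n α : Type*} [Fintype n]

theorem transpose_mul_vecMulVec_self_mul [CommSemiring α] (M : Matrix n n α) (x : n → α) :
    Mᵀ * vecMulVec x x * M = vecMulVec (x ᵥ* M) (x ᵥ* M) := by
  rw [mul_vecMulVec, vecMulVec_mul, mulVec_transpose]

theorem vecMul_one_sub_smul_vecMulVec_self [DecidableEq n] [CommRing α] (c : α) (x d : n → α) :
    x ᵥ* (1 - c • vecMulVec d d) = x - (c * (x ⬝ᵥ d)) • d := by
  rw [vecMul_sub, vecMul_one, vecMul_smul, vecMul_vecMulVec, smul_smul]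

end Matrix

namespace Gossip

variable {nr ns : ℕ}

theorem sum_filter_le_eq_sum_natAdd {M : Type*} [AddCommMonoid M] (F : Fin (nr + ns) → M) :
    ∑ j ∈ Finset.univ.filter (fun j : Fin (nr + ns) => nr ≤ (j : ℕ)), F j =
      ∑ b : Fin ns, F (Fin.natAdd nr b) := by
  have hreg : ∀ a : Fin nr, ¬ nr ≤ (a : ℕ) := fun a => not_le.2 a.isLt
  simp [Finset.sum_filter, Fin.sum_univ_add, hreg]

def xiExt (nr ns : ℕ) : Fin (nr + ns) → ℝ := Fin.append (xiV nr) 0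

@[simp] theorem xiExt_castAdd (k : Fin nr) : xiExt nr ns (Fin.castAdd ns k) = xiV nr k :=
  Fin.append_left _ _ k

@[simp] theorem xiExt_natAdd (b : Fin ns) : xiExt nr ns (Fin.natAdd nr b) = 0 :=
  Fin.append_right _ _ b

theorem regInd_apply (m : Fin (nr + ns)) (k : Fin nr) :
    regInd nr ns m k = if m = Fin.castAdd ns k then 1 else 0 := by
  simp [regInd, Fin.ext_iff, eq_comm]

theorem xiV_dotProduct_regInd (m : Fin (nr + ns)) : xiV nr ⬝ᵥ regInd nr ns m = xiExt nr ns m := by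
  refine Fin.addCases (fun a => ?_) (fun b => ?_) m
  · simp [regInd_apply, dotProduct, Fin.castAdd_inj]
  · have hne : ∀ k : Fin nr, Fin.natAdd nr b ≠ Fin.castAdd ns k := fun k h => by
      have := congrArg Fin.val h
      simp only [Fin.val_natAdd, Fin.val_castAdd] at this
      omega
    simp [regInd_apply, dotProduct, hne]

theorem Qmat_swap (i j : Fin (nr + ns)) : Qmat nr ns (j, i) = Qmat nr ns (i, j) := by
  simp only [Qmat, ← neg_sub (regInd nr ns i), neg_vecMulVec, vecMulVec_neg, neg_neg]

theorem transpose_Qmat_mul_vecMulVec_xiV_mul_apply (i j : Fin (nr + ns)) (k l : Fin nr) :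
    ((Qmat nr ns (i, j))ᵀ * vecMulVec (xiV nr) (xiV nr) * Qmat nr ns (i, j)) k l =
      (xiV nr k - 2⁻¹ * (xiExt nr ns i - xiExt nr ns j) *
          ((if i = Fin.castAdd ns k then 1 else 0) - (if j = Fin.castAdd ns k then 1 else 0))) *
        (xiV nr l - 2⁻¹ * (xiExt nr ns i - xiExt nr ns j) *
          ((if i = Fin.castAdd ns l then 1 else 0) - (if j = Fin.castAdd ns l then 1 else 0))) := by
  rw [transpose_mul_vecMulVec_self_mul, Qmat, vecMul_one_sub_smul_vecMulVec_self,
    dotProduct_sub, xiV_dotProduct_regInd, xiV_dotProduct_regInd]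
  simp [vecMulVec_apply, regInd_apply, mul_assoc]

theorem xiV_mul_self (k : Fin nr) : xiV nr k * xiV nr k = (nr : ℝ)⁻¹ := by
  have hsq := Real.sq_sqrt (Nat.cast_nonneg (α := ℝ) nr)
  unfold xiV
  split_ifs <;> field_simp <;> rw [hsq]

theorem sum_xiV (hnr : Even nr) : ∑ k, xiV nr k = 0 := by
  obtain ⟨m, rfl⟩ := hnr
  have hhalf : (m + m) / 2 = m := by omega
  have hright : ∀ b : Fin m, ¬ m + (b : ℕ) < m := fun b => by omega
  rw [Fin.sum_univ_add]
  simp only [xiV, Fin.val_castAdd, Fin.val_natAdd, hhalf, Fin.is_lt, hright, if_true, if_false,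
    Finset.sum_const, Finset.card_univ, Fintype.card_fin, nsmul_eq_mul]
  ring

variable {A : Matrix (Fin (nr + ns)) (Fin (nr + ns)) ℝ} {ldr ls : ℝ}

theorem sum_sum_eq_two_mul_alphaW (hsymm : A.IsSymm) (hdiag : ∀ i, A i i = 0) :
    ∑ i, ∑ j, A i j = 2 * alphaW nr ns A :=
  sum_sum_eq_two_mul_sum_sum_ite_lt A hsymm.apply hdiag

theorem integral_comp_edge {Ω : Type*} [MeasurableSpace Ω] (P : Measure Ω) [IsFiniteMeasure P]
    (hsymm : A.IsSymm) (hdiag : ∀ i, A i i = 0) (hnonneg : ∀ i j, 0 ≤ A i j)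
    {X : Ω → Fin (nr + ns) × Fin (nr + ns)} (hX : Measurable X) (hlt : ∀ ω, (X ω).1 < (X ω).2)
    (hdist : ∀ i j, i < j → P {ω | X ω = (i, j)} = ENNReal.ofReal (A i j / alphaW nr ns A))
    (f : Fin (nr + ns) × Fin (nr + ns) → ℝ) (hf : ∀ i j, f (j, i) = f (i, j)) :
    ∫ ω, f (X ω) ∂P = (2 * alphaW nr ns A)⁻¹ * ∑ i, ∑ j, A i j * f (i, j) := by
  have hα : 0 ≤ alphaW nr ns A := by
    have := sum_sum_eq_two_mul_alphaW hsymm hdiag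
    have : 0 ≤ ∑ i, ∑ j, A i j :=
      Finset.sum_nonneg fun i _ => Finset.sum_nonneg fun j _ => hnonneg i j
    linarith
  have hpairs := sum_sum_eq_two_mul_sum_sum_ite_lt (fun i j => A i j / alphaW nr ns A * f (i, j))
    (fun i j => by rw [hsymm.apply, hf]) (fun i => by rw [hdiag, zero_div, zero_mul])
  rw [integral_comp_eq_sum_sum_ite_lt P hX hlt _ (fun i j _ => div_nonneg (hnonneg i j) hα) hdist,
    ← inv_mul_cancel_left₀ two_ne_zero (∑ i, ∑ j, _), ← hpairs]
  simp only [Finset.mul_sum]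
  exact Finset.sum_congr rfl fun i _ => Finset.sum_congr rfl fun j _ => by ring

theorem weight_mul_xiV_sub
    (hA_diff : ∀ i j : Fin (nr + ns), (i : ℕ) < nr → (j : ℕ) < nr →
      ¬(((i : ℕ) < nr / 2) ↔ ((j : ℕ) < nr / 2)) → A i j = ldr)
    (k a : Fin nr) :
    A (Fin.castAdd ns k) (Fin.castAdd ns a) * (xiV nr k - xiV nr a) =
      ldr * (xiV nr k - xiV nr a) := by
  by_cases hc : ((k : ℕ) < nr / 2 ↔ (a : ℕ) < nr / 2)
  · simp only [xiV, hc, sub_self, mul_zero]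
  · rw [hA_diff _ _ (by simp) (by simp) (by simpa using hc)]

theorem sum_weight_mul_xiExt_sub (hnr : Even nr)
    (hcross : ∀ k a : Fin nr, A (Fin.castAdd ns k) (Fin.castAdd ns a) * (xiV nr k - xiV nr a) =
      ldr * (xiV nr k - xiV nr a))
    (hrow : ∀ k : Fin nr, ∑ b : Fin ns, A (Fin.castAdd ns k) (Fin.natAdd nr b) = ls)
    (k : Fin nr) :
    ∑ m, A (Fin.castAdd ns k) m * (xiExt nr ns (Fin.castAdd ns k) - xiExt nr ns m) =
      (ldr * nr + ls) * xiV nr k := by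
  rw [Fin.sum_univ_add]
  simp only [xiExt_castAdd, xiExt_natAdd, sub_zero, hcross, ← Finset.sum_mul, hrow,
    ← Finset.mul_sum, Finset.sum_sub_distrib, sum_xiV hnr, Finset.sum_const, Finset.card_univ,
    Fintype.card_fin, nsmul_eq_mul]
  ring

theorem sum_weight_mul_xiExt_sub_sq (hnr : Even nr)
    (hcross : ∀ k a : Fin nr, A (Fin.castAdd ns k) (Fin.castAdd ns a) * (xiV nr k - xiV nr a) =
      ldr * (xiV nr k - xiV nr a))
    (hrow : ∀ k : Fin nr, ∑ b : Fin ns, A (Fin.castAdd ns k) (Fin.natAdd nr b) = ls)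
    (k : Fin nr) :
    ∑ m, A (Fin.castAdd ns k) m * (xiExt nr ns (Fin.castAdd ns k) - xiExt nr ns m) ^ 2 =
      2 * ldr + ls * (nr : ℝ)⁻¹ := by
  have hnr0 : (nr : ℝ) ≠ 0 := Nat.cast_ne_zero.2 k.pos.ne'
  have hreg : ∑ a, A (Fin.castAdd ns k) (Fin.castAdd ns a) * (xiV nr k - xiV nr a) ^ 2 =
      2 * ldr := by
    have hsq : ∀ a, A (Fin.castAdd ns k) (Fin.castAdd ns a) * (xiV nr k - xiV nr a) ^ 2 =
        ldr * (xiV nr k * xiV nr k + xiV nr a * xiV nr a - 2 * xiV nr k * xiV nr a) := by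
      intro a
      rw [sq, ← mul_assoc, hcross]
      ring
    simp only [hsq, ← Finset.mul_sum, Finset.sum_add_distrib, Finset.sum_sub_distrib,
      xiV_mul_self, sum_xiV hnr, Finset.sum_const, Finset.card_univ, Fintype.card_fin,
      nsmul_eq_mul, mul_assoc]
    field_simp
    ring
  rw [Fin.sum_univ_add]
  simp only [xiExt_castAdd, xiExt_natAdd, sub_zero, hreg, ← Finset.sum_mul, hrow]
  rw [sq, xiV_mul_self]

theorem weight_mul_xiExt_sub_sq
    (hcross : ∀ k a : Fin nr, A (Fin.castAdd ns k) (Fin.castAdd ns a) * (xiV nr k - xiV nr a) =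
      ldr * (xiV nr k - xiV nr a))
    (k l : Fin nr) :
    A (Fin.castAdd ns k) (Fin.castAdd ns l) *
        (xiExt nr ns (Fin.castAdd ns k) - xiExt nr ns (Fin.castAdd ns l)) ^ 2 =
      2 * ldr * ((nr : ℝ)⁻¹ - xiV nr k * xiV nr l) := by
  rw [xiExt_castAdd, xiExt_castAdd, sq, ← mul_assoc, hcross]
  linear_combination ldr * (xiV_mul_self k + xiV_mul_self l)

theorem sum_weight_mul_Qform (hsymm : A.IsSymm) (hnr : Even nr)
    (hcross : ∀ k a : Fin nr, A (Fin.castAdd ns k) (Fin.castAdd ns a) * (xiV nr k - xiV nr a) =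
      ldr * (xiV nr k - xiV nr a))
    (hrow : ∀ k : Fin nr, ∑ b : Fin ns, A (Fin.castAdd ns k) (Fin.natAdd nr b) = ls)
    (k l : Fin nr) :
    ∑ i, ∑ j, A i j *
      ((xiV nr k - 2⁻¹ * (xiExt nr ns i - xiExt nr ns j) *
          ((if i = Fin.castAdd ns k then 1 else 0) - (if j = Fin.castAdd ns k then 1 else 0))) *
        (xiV nr l - 2⁻¹ * (xiExt nr ns i - xiExt nr ns j) *
          ((if i = Fin.castAdd ns l then 1 else 0) - (if j = Fin.castAdd ns l then 1 else 0)))) =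
      (∑ i, ∑ j, A i j) * (xiV nr k * xiV nr l) - 2 * (ldr * nr + ls) * (xiV nr k * xiV nr l) +
        2⁻¹ * ((if k = l then 2 * ldr + ls * (nr : ℝ)⁻¹ else 0) -
          2 * ldr * ((nr : ℝ)⁻¹ - xiV nr k * xiV nr l)) := by
  set c : Fin (nr + ns) → Fin (nr + ns) → ℝ := fun i j => xiExt nr ns i - xiExt nr ns j
  set d : Fin nr → Fin (nr + ns) → Fin (nr + ns) → ℝ := fun k i j =>
    (if i = Fin.castAdd ns k then 1 else 0) - (if j = Fin.castAdd ns k then 1 else 0)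
  have hexpand : ∀ i j, A i j * ((xiV nr k - 2⁻¹ * c i j * d k i j) *
      (xiV nr l - 2⁻¹ * c i j * d l i j)) =
      A i j * (xiV nr k * xiV nr l) - 2⁻¹ * xiV nr l * (A i j * c i j * d k i j) -
        2⁻¹ * xiV nr k * (A i j * c i j * d l i j) +
        4⁻¹ * (A i j * c i j ^ 2 * (d k i j * d l i j)) := fun i j => by ring
  have hlin := sum_sum_mul_ite_sub_ite (fun i j => A i j * c i j)
    (fun i j => by simp only [c, hsymm.apply]; ring)
  have hquad := sum_sum_mul_ite_sub_ite_mul (fun i j => A i j * c i j ^ 2)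
    (fun i j => by simp only [c, hsymm.apply]; ring) (Fin.castAdd ns k) (Fin.castAdd ns l)
  simp only [d] at hexpand hlin hquad
  simp only [hexpand, Finset.sum_add_distrib, Finset.sum_sub_distrib, ← Finset.mul_sum,
    ← Finset.sum_mul, hlin, hquad, Fin.castAdd_inj, c, sum_weight_mul_xiExt_sub hnr hcross hrow,
    sum_weight_mul_xiExt_sub_sq hnr hcross hrow, weight_mul_xiExt_sub_sq hcross]
  ring

end Gossip

theorem gossip_QxiQ_identity_general
    (nr ns : ℕ) (hnr_even : Even nr)
    (A : Matrix (Fin (nr + ns)) (Fin (nr + ns)) ℝ)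
    (hA_symm : A.IsSymm) (hA_diag : ∀ i, A i i = 0)
    (lsr ldr ls : ℝ)
    (hlsr : lsr ∈ Set.Ioo (0 : ℝ) 1) (hldr : ldr ∈ Set.Ioo (0 : ℝ) 1)
    (hA_same : ∀ i j : Fin (nr + ns), i ≠ j → (i : ℕ) < nr → (j : ℕ) < nr →
      (((i : ℕ) < nr / 2) ↔ ((j : ℕ) < nr / 2)) → A i j = lsr)
    (hA_diff : ∀ i j : Fin (nr + ns), (i : ℕ) < nr → (j : ℕ) < nr →
      ¬(((i : ℕ) < nr / 2) ↔ ((j : ℕ) < nr / 2)) → A i j = ldr)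
    (hA_stub : ∀ i j : Fin (nr + ns), (i : ℕ) < nr → nr ≤ (j : ℕ) →
      A i j ∈ Set.Ico (0 : ℝ) 1)
    (hA_ss : ∀ i j : Fin (nr + ns), nr ≤ (i : ℕ) → nr ≤ (j : ℕ) → A i j = 0)
    (hA_rowsum : ∀ i : Fin (nr + ns), (i : ℕ) < nr →
      (∑ j ∈ Finset.univ.filter (fun j : Fin (nr + ns) => nr ≤ (j : ℕ)), A i j) = ls)
    (Ω : Type) [MeasurableSpace Ω] (P : Measure Ω) [IsProbabilityMeasure P]
    (edge : ℕ → Ω → Fin (nr + ns) × Fin (nr + ns))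
    (hmeas : ∀ t, Measurable (edge t))
    (hlt : ∀ t ω, (edge t ω).1 < (edge t ω).2)
    (hdist : ∀ (t : ℕ) (i j : Fin (nr + ns)), i < j →
      P {ω | edge t ω = (i, j)} = ENNReal.ofReal (A i j / alphaW nr ns A))
    (l1 : ℝ) (hl1 : l1 = ls / (2 * alphaW nr ns A))
    (l2 : ℝ) (hl2 : l2 = (ldr * (nr : ℝ) + ls) / (2 * alphaW nr ns A))
    :
    (Matrix.of fun k l => ∫ ω,
        ((Qmat nr ns (edge 0 ω))ᵀ * Matrix.vecMulVec (xiV nr) (xiV nr) *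
          Qmat nr ns (edge 0 ω)) k l ∂P) =
      (1 - 2 * l2) • Matrix.vecMulVec (xiV nr) (xiV nr) +
        (l1 / (2 * (nr : ℝ))) • (1 : Matrix (Fin nr) (Fin nr) ℝ) +
        (2 * (l2 - l1) / (nr : ℝ)) •
          (Matrix.vecMulVec (xiV nr) (xiV nr) +
            (2⁻¹ : ℝ) • ((1 : Matrix (Fin nr) (Fin nr) ℝ) -
              Matrix.vecMulVec (etaV nr) (etaV nr) - Matrix.vecMulVec (xiV nr) (xiV nr))) := by
  have hA_nonneg : ∀ i j, 0 ≤ A i j := by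
    intro i j
    rcases lt_or_ge (i : ℕ) nr with hi | hi <;> rcases lt_or_ge (j : ℕ) nr with hj | hj
    · by_cases hij : i = j
      · rw [hij, hA_diag]
      by_cases hc : ((i : ℕ) < nr / 2 ↔ (j : ℕ) < nr / 2)
      · exact hA_same i j hij hi hj hc ▸ hlsr.1.le
      · exact hA_diff i j hi hj hc ▸ hldr.1.le
    · exact (hA_stub i j hi hj).1
    · exact hA_symm.apply j i ▸ (hA_stub j i hj hi).1
    · exact (hA_ss i j hi hj).ge
  have hE := Gossip.integral_comp_edge P hA_symm hA_diag hA_nonneg (hmeas 0) (hlt 0) (hdist 0)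
  -- the edge probabilities sum to one, which would fail for `α = 0`
  have hα : alphaW nr ns A ≠ 0 := fun h0 => by
    simpa [h0] using hE (fun _ => 1) fun _ _ => rfl
  have hrow : ∀ k : Fin nr, ∑ b : Fin ns, A (Fin.castAdd ns k) (Fin.natAdd nr b) = ls :=
    fun k => by rw [← Gossip.sum_filter_le_eq_sum_natAdd]; exact hA_rowsum _ (by simp)
  ext k l
  rw [of_apply, hE (fun e => ((Qmat nr ns e)ᵀ * vecMulVec (xiV nr) (xiV nr) * Qmat nr ns e) k l)
    fun i j => by rw [Gossip.Qmat_swap]]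
  simp only [Gossip.transpose_Qmat_mul_vecMulVec_xiV_mul_apply]
  rw [Gossip.sum_weight_mul_Qform hA_symm hnr_even (Gossip.weight_mul_xiV_sub hA_diff) hrow,
    Gossip.sum_sum_eq_two_mul_alphaW hA_symm hA_diag]
  have hnr0 : (nr : ℝ) ≠ 0 := Nat.cast_ne_zero.2 k.pos.ne'
  have hη : etaV nr k * etaV nr l = (nr : ℝ)⁻¹ := by
    simp only [etaV, one_div, ← mul_inv, Real.mul_self_sqrt (Nat.cast_nonneg nr)]
  simp only [Matrix.add_apply, Matrix.smul_apply, Matrix.sub_apply, one_apply, vecMulVec_apply,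
    hη, smul_eq_mul]
  subst hl1 hl2
  split_ifs <;> field_simp <;> ring

theorem gossip_QxiQ_identity
    (nr ns : ℕ) (hnr_even : Even nr) (hnr_pos : 0 < nr) (hns_pos : 0 < ns)
    (A : Matrix (Fin (nr + ns)) (Fin (nr + ns)) ℝ)
    (hA_symm : A.IsSymm) (hA_diag : ∀ i, A i i = 0)
    (lsr ldr ls : ℝ)
    (hlsr : lsr ∈ Set.Ioo (0 : ℝ) 1) (hldr : ldr ∈ Set.Ioo (0 : ℝ) 1)
    (hls_nonneg : 0 ≤ ls)
    (hA_same : ∀ i j : Fin (nr + ns), i ≠ j → (i : ℕ) < nr → (j : ℕ) < nr →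
      (((i : ℕ) < nr / 2) ↔ ((j : ℕ) < nr / 2)) → A i j = lsr)
    (hA_diff : ∀ i j : Fin (nr + ns), (i : ℕ) < nr → (j : ℕ) < nr →
      ¬(((i : ℕ) < nr / 2) ↔ ((j : ℕ) < nr / 2)) → A i j = ldr)
    (hA_stub : ∀ i j : Fin (nr + ns), (i : ℕ) < nr → nr ≤ (j : ℕ) →
      A i j ∈ Set.Ico (0 : ℝ) 1)
    (hA_ss : ∀ i j : Fin (nr + ns), nr ≤ (i : ℕ) → nr ≤ (j : ℕ) → A i j = 0)
    (hA_rowsum : ∀ i : Fin (nr + ns), (i : ℕ) < nr →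
      (∑ j ∈ Finset.univ.filter (fun j : Fin (nr + ns) => nr ≤ (j : ℕ)), A i j) = ls)
    (Ω : Type) [MeasurableSpace Ω] (P : Measure Ω) [IsProbabilityMeasure P]
    (edge : ℕ → Ω → Fin (nr + ns) × Fin (nr + ns))
    (hmeas : ∀ t, Measurable (edge t))
    (hlt : ∀ t ω, (edge t ω).1 < (edge t ω).2)
    (hdist : ∀ (t : ℕ) (i j : Fin (nr + ns)), i < j →
      P {ω | edge t ω = (i, j)} = ENNReal.ofReal (A i j / alphaW nr ns A))
    (hindep : iIndepFun edge P)
    (l1 : ℝ) (hl1 : l1 = ls / (2 * alphaW nr ns A))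
    (l2 : ℝ) (hl2 : l2 = (ldr * (nr : ℝ) + ls) / (2 * alphaW nr ns A))
    :
    (Matrix.of fun k l => ∫ ω,
        ((Qmat nr ns (edge 0 ω))ᵀ * Matrix.vecMulVec (xiV nr) (xiV nr) *
          Qmat nr ns (edge 0 ω)) k l ∂P) =
      (1 - 2 * l2) • Matrix.vecMulVec (xiV nr) (xiV nr) +
        (l1 / (2 * (nr : ℝ))) • (1 : Matrix (Fin nr) (Fin nr) ℝ) +
        (2 * (l2 - l1) / (nr : ℝ)) •
          (Matrix.vecMulVec (xiV nr) (xiV nr) +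
            (2⁻¹ : ℝ) • ((1 : Matrix (Fin nr) (Fin nr) ℝ) -
              Matrix.vecMulVec (etaV nr) (etaV nr) - Matrix.vecMulVec (xiV nr) (xiV nr))) :=
  gossip_QxiQ_identity_general nr ns hnr_even A hA_symm hA_diag lsr ldr ls hlsr hldr hA_same hA_diff
    hA_stub hA_ss hA_rowsum Ω P edge hmeas hlt hdist l1 hl1 l2 hl2
end
end

section
/- Under the gossip model setup with l^{(s)} > 0, for every t ∈ ℕ the product of update matrices satisfies E{‖Q(0)Q(1)⋯Q(t)‖₁} ≤ (r0 n)^{3/2}·(1 − λ1)^{t+1}, where ‖·‖₁ denotes the maximum absolute column sum norm on ℝ^{r0 n × r0 n}. -/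
/-! Every update matrix is entrywise nonnegative, so the largest column sum of
`Q(0)⋯Q(t)` is at most the sum of all its entries, `1ᵀ Q(0)⋯Q(t) 1`. A row sum of `Q(s)` is `1`,
except `1/2` in the row of the regular endpoint of a regular–stubborn edge; since that edge is
chosen with probability `l^{(s)}/α`, `E[Q(s) 1] = (1 - λ₁) 1`. Peeling off the last factor, which
is independent of the earlier ones, gives `E[1ᵀ Q(0)⋯Q(t) 1] = r₀n (1 - λ₁)^(t+1)`, and
`r₀n ≤ (r₀n)^(3/2)`. -/

open MeasureTheory ProbabilityTheory Matrix Finset Filter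

set_option autoImplicit false
set_option linter.unusedVariables false

noncomputable section

section MatrixBounds

variable {m n : Type*} [Fintype m] [Fintype n]

lemma Matrix.list_prod_nonneg {R : Type*} [Semiring R] [PartialOrder R] [IsOrderedRing R]
    [DecidableEq n] {l : List (Matrix n n R)} (hl : ∀ M ∈ l, ∀ i j, 0 ≤ M i j) (i j : n) :
    0 ≤ l.prod i j := by
  refine List.prod_induction (fun M : Matrix n n R => ∀ i j, 0 ≤ M i j) ?_ ?_ hl i j
  · exact fun M N hM hN i j => sum_nonneg fun k _ => mul_nonneg (hM i k) (hN k j)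
  · intro i j
    rw [one_apply]
    split_ifs <;> simp

lemma Matrix.iSup_sum_abs_le_one_dotProduct_mulVec_one {M : Matrix m n ℝ}
    (hM : ∀ i j, 0 ≤ M i j) : ⨆ j, ∑ i, |M i j| ≤ 1 ⬝ᵥ M *ᵥ 1 := by
  simp only [dotProduct, mulVec, Pi.one_apply, one_mul, mul_one]
  refine Real.iSup_le (fun j => ?_) (sum_nonneg fun i _ => sum_nonneg fun j _ => hM i j)
  simp_rw [abs_of_nonneg (hM _ j)]
  exact sum_le_sum fun i _ => single_le_sum (fun j _ => hM i j) (mem_univ j)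

end MatrixBounds

section IndependentProducts

variable {Ω E n : Type*} [Fintype n] [DecidableEq n] {X : ℕ → Ω → E}

/-- The product `Q (v 0) * ⋯ * Q (v (t - 1))` as a function of the path restricted to `range t`,
the form in which `iIndepFun.indepFun_finset` separates it from later steps. -/
def pathProd (Q : E → Matrix n n ℝ) (t : ℕ) (v : Finset.range t → E) : Matrix n n ℝ :=
  ((List.range t).pmap (fun s hs => Q (v ⟨s, Finset.mem_range.2 (List.mem_range.1 hs)⟩))
    fun _ h => h).prod

lemma pathProd_restrict (Q : E → Matrix n n ℝ) (t : ℕ) (ω : Ω) :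
    pathProd Q t (fun s => X s ω) = ((List.range t).map fun s => Q (X s ω)).prod :=
  congrArg List.prod (List.pmap_eq_map (f := fun s => Q (X s ω)) _)

variable [MeasurableSpace Ω] {P : Measure Ω} [MeasurableSpace E] [Finite E]
  [MeasurableSingletonClass E]

lemma integrable_comp_list_prod [IsFiniteMeasure P] (hX : ∀ s, Measurable (X s))
    (Q : E → Matrix n n ℝ) (t : ℕ) (F : Matrix n n ℝ → ℝ) :
    Integrable (fun ω => F ((List.range t).map fun s => Q (X s ω)).prod) P := by
  simp_rw [← pathProd_restrict]
  exact (Integrable.of_finite (f := F ∘ pathProd Q t)).comp_measurable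
    (measurable_pi_lambda _ fun s => hX s)

lemma indepFun_comp_list_prod (hX : ∀ s, Measurable (X s)) (hind : iIndepFun X P)
    (Q : E → Matrix n n ℝ) (t : ℕ) (F : Matrix n n ℝ → ℝ) (G : E → ℝ) :
    IndepFun (fun ω => F ((List.range t).map fun s => Q (X s ω)).prod) (fun ω => G (X t ω)) P := by
  simp_rw [← pathProd_restrict]
  exact (hind.indepFun_finset (range t) {t} (by simp) hX).comp
    (φ := F ∘ pathProd Q t) (ψ := fun v => G (v ⟨t, mem_singleton_self t⟩))
    (measurable_of_finite _) (measurable_of_finite _)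

theorem integral_one_dotProduct_list_prod_mulVec_one [IsProbabilityMeasure P]
    (hX : ∀ s, Measurable (X s)) (hind : iIndepFun X P) (Q : E → Matrix n n ℝ) {c : ℝ}
    (hQ : ∀ s k, ∫ ω, (Q (X s ω) *ᵥ 1) k ∂P = c) (t : ℕ) :
    ∫ ω, 1 ⬝ᵥ ((List.range t).map fun s => Q (X s ω)).prod *ᵥ 1 ∂P = Fintype.card n * c ^ t := by
  induction t with
  | zero => simp [dotProduct]
  | succ t ih =>
    set M := fun ω => ((List.range t).map fun s => Q (X s ω)).prod
    have hsplit : ∀ ω, 1 ⬝ᵥ ((List.range (t + 1)).map fun s => Q (X s ω)).prod *ᵥ 1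
        = ∑ k, (1 ᵥ* M ω) k * (Q (X t ω) *ᵥ 1) k := fun ω => by
      rw [List.range_succ, List.map_append, List.prod_append, dotProduct_mulVec, ← vecMul_vecMul,
        ← dotProduct_mulVec]
      simp [M, dotProduct]
    have hindep : ∀ k, IndepFun (fun ω => (1 ᵥ* M ω) k) (fun ω => (Q (X t ω) *ᵥ 1) k) P :=
      fun k => indepFun_comp_list_prod hX hind Q t (fun N => (1 ᵥ* N) k) (fun e => (Q e *ᵥ 1) k)
    have hM : ∀ k, Integrable (fun ω => (1 ᵥ* M ω) k) P :=
      fun k => integrable_comp_list_prod hX Q t (fun N => (1 ᵥ* N) k)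
    have hQint : ∀ k, Integrable (fun ω => (Q (X t ω) *ᵥ 1) k) P :=
      fun k => (Integrable.of_finite (f := fun e => (Q e *ᵥ 1) k)).comp_measurable (hX t)
    calc _ = ∫ ω, ∑ k, (1 ᵥ* M ω) k * (Q (X t ω) *ᵥ 1) k ∂P :=
          integral_congr_ae (.of_forall hsplit)
      _ = ∑ k, (∫ ω, (1 ᵥ* M ω) k ∂P) * c := by
        rw [integral_finsetSum (f := fun k ω => (1 ᵥ* M ω) k * (Q (X t ω) *ᵥ 1) k) _
          fun k _ => (hindep k).integrable_mul (hM k) (hQint k)]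
        refine sum_congr rfl fun k _ => ?_
        rw [← hQ t k]
        exact (hindep k).integral_mul_eq_mul_integral (hM k).1 (hQint k).1
      _ = c * ∫ ω, 1 ⬝ᵥ M ω *ᵥ 1 ∂P := by
        rw [← sum_mul, ← integral_finsetSum _ fun k _ => hM k, mul_comm]
        simp_rw [dotProduct_mulVec, dotProduct_one]
      _ = Fintype.card n * c ^ (t + 1) := by rw [ih]; ring

end IndependentProducts

section GossipMatrices

variable {nr ns : ℕ}

def stubbornEdges (nr ns : ℕ) (k : Fin nr) : Finset (Fin (nr + ns) × Fin (nr + ns)) :=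
  (univ.filter fun j : Fin (nr + ns) => nr ≤ (j : ℕ)).image (Prod.mk (Fin.castAdd ns k))

lemma mem_stubbornEdges {k : Fin nr} {e : Fin (nr + ns) × Fin (nr + ns)} :
    e ∈ stubbornEdges nr ns k ↔ (e.1 : ℕ) = k ∧ nr ≤ (e.2 : ℕ) := by
  obtain ⟨e₁, e₂⟩ := e
  simp only [stubbornEdges, mem_image, mem_filter, mem_univ, true_and, Prod.mk.injEq,
    Fin.ext_iff, Fin.val_castAdd]
  exact ⟨fun ⟨j, hj, h₁, h₂⟩ => ⟨h₁.symm, h₂ ▸ hj⟩, fun ⟨h₁, h₂⟩ => ⟨e₂, h₂, h₁.symm, rfl⟩⟩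

lemma sum_regInd (i : Fin (nr + ns)) :
    ∑ k, regInd nr ns i k = if (i : ℕ) < nr then 1 else 0 := by
  split_ifs with hi
  · rw [sum_eq_single ⟨i, hi⟩] <;> simp +contextual [regInd, Fin.ext_iff]
  · exact sum_eq_zero fun k _ => if_neg (by omega)

lemma alphaW_nonneg {A : Matrix (Fin (nr + ns)) (Fin (nr + ns)) ℝ}
    (hA : ∀ i j : Fin (nr + ns), i < j → 0 ≤ A i j) : 0 ≤ alphaW nr ns A :=
  sum_nonneg fun i _ => sum_nonneg fun j _ => by
    split_ifs with h
    exacts [hA i j h, le_rfl]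

lemma Qmat_nonneg {e : Fin (nr + ns) × Fin (nr + ns)} (he : e.1 ≠ e.2) (i j : Fin nr) :
    0 ≤ Qmat nr ns e i j := by
  have he' : (e.1 : ℕ) ≠ e.2 := Fin.val_ne_of_ne he
  rcases eq_or_ne i j with rfl | hij
  all_goals simp only [Qmat, regInd, Matrix.sub_apply, Matrix.smul_apply, vecMulVec_apply,
    one_apply, Pi.sub_apply, smul_eq_mul]
  · split_ifs <;> first | (exfalso; omega) | norm_num
  · have := Fin.val_ne_of_ne hij
    split_ifs <;> first | (exfalso; omega) | norm_num

lemma Qmat_mulVec_one {e : Fin (nr + ns) × Fin (nr + ns)} (he : e.1 < e.2) (k : Fin nr) :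
    (Qmat nr ns e *ᵥ 1) k = 1 - 2⁻¹ * Set.indicator (stubbornEdges nr ns k) 1 e := by
  have he' : (e.1 : ℕ) < e.2 := he
  simp only [Qmat, sub_mulVec, smul_mulVec, one_mulVec, vecMulVec_mulVec, Pi.sub_apply,
    Pi.smul_apply, smul_eq_mul, Set.indicator, Finset.mem_coe, mem_stubbornEdges]
  simp only [dotProduct_one, Pi.sub_apply, sum_sub_distrib, sum_regInd]
  simp only [regInd]
  split_ifs <;> first | (exfalso; omega) | norm_num

section EdgeLaw

variable {Ω : Type*} [MeasurableSpace Ω] {P : Measure Ω}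
  {A : Matrix (Fin (nr + ns)) (Fin (nr + ns)) ℝ} {ls : ℝ} {X : Ω → Fin (nr + ns) × Fin (nr + ns)}

lemma measure_preimage_stubbornEdges (hX : Measurable X)
    (hdist : ∀ i j : Fin (nr + ns), i < j →
      P {ω | X ω = (i, j)} = ENNReal.ofReal (A i j / alphaW nr ns A))
    (hα : 0 ≤ alphaW nr ns A) (k : Fin nr)
    (hA_stub : ∀ j : Fin (nr + ns), nr ≤ (j : ℕ) → 0 ≤ A (Fin.castAdd ns k) j)
    (hA_row : ∑ j ∈ univ.filter (fun j : Fin (nr + ns) => nr ≤ (j : ℕ)),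
      A (Fin.castAdd ns k) j = ls) :
    P (X ⁻¹' stubbornEdges nr ns k) = ENNReal.ofReal (ls / alphaW nr ns A) := by
  rw [← sum_measure_preimage_singleton _ fun e _ => hX (measurableSet_singleton e),
    stubbornEdges, sum_image fun _ _ _ _ h => (Prod.mk.inj h).2, ← hA_row, sum_div,
    ENNReal.ofReal_sum_of_nonneg fun j hj => div_nonneg (hA_stub j (mem_filter.1 hj).2) hα]
  refine sum_congr rfl fun j hj => hdist _ _ ?_
  exact Fin.lt_def.2 (lt_of_lt_of_le k.isLt (mem_filter.1 hj).2)

lemma integral_Qmat_mulVec_one [IsProbabilityMeasure P] (hX : Measurable X)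
    (hlt : ∀ ω, (X ω).1 < (X ω).2)
    (hdist : ∀ i j : Fin (nr + ns), i < j →
      P {ω | X ω = (i, j)} = ENNReal.ofReal (A i j / alphaW nr ns A))
    (hα : 0 ≤ alphaW nr ns A) (k : Fin nr)
    (hA_stub : ∀ j : Fin (nr + ns), nr ≤ (j : ℕ) → 0 ≤ A (Fin.castAdd ns k) j)
    (hA_row : ∑ j ∈ univ.filter (fun j : Fin (nr + ns) => nr ≤ (j : ℕ)),
      A (Fin.castAdd ns k) j = ls) :
    ∫ ω, (Qmat nr ns (X ω) *ᵥ 1) k ∂P = 1 - ls / (2 * alphaW nr ns A) := by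
  set S := X ⁻¹' stubbornEdges nr ns k
  have hS : MeasurableSet S := hX (Finset.measurableSet _)
  have hls : 0 ≤ ls := hA_row ▸ sum_nonneg fun j hj => hA_stub j (mem_filter.1 hj).2
  calc ∫ ω, (Qmat nr ns (X ω) *ᵥ 1) k ∂P
      = ∫ ω, (1 - 2⁻¹ * S.indicator 1 ω) ∂P :=
        integral_congr_ae (.of_forall fun ω => (Qmat_mulVec_one (hlt ω) k).trans
          (by rw [← Set.indicator_comp_right]; rfl))
    _ = 1 - 2⁻¹ * P.real S := by
        rw [integral_sub (integrable_const 1) (((integrable_const 1).indicator hS).const_mul _),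
          integral_const_mul, integral_indicator_one hS, integral_const, probReal_univ, one_smul]
    _ = 1 - ls / (2 * alphaW nr ns A) := by
        rw [measureReal_def, measure_preimage_stubbornEdges hX hdist hα k hA_stub hA_row,
          ENNReal.toReal_ofReal (div_nonneg hls hα)]
        ring

end EdgeLaw
end GossipMatrices

theorem gossip_product_column_norm_bound_general
    (nr ns : ℕ) (hnr_pos : 0 < nr)
    (A : Matrix (Fin (nr + ns)) (Fin (nr + ns)) ℝ)
    (lsr ldr ls : ℝ)
    (hlsr : lsr ∈ Set.Ioo (0 : ℝ) 1) (hldr : ldr ∈ Set.Ioo (0 : ℝ) 1)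
    (hA_same : ∀ i j : Fin (nr + ns), i ≠ j → (i : ℕ) < nr → (j : ℕ) < nr →
      (((i : ℕ) < nr / 2) ↔ ((j : ℕ) < nr / 2)) → A i j = lsr)
    (hA_diff : ∀ i j : Fin (nr + ns), (i : ℕ) < nr → (j : ℕ) < nr →
      ¬(((i : ℕ) < nr / 2) ↔ ((j : ℕ) < nr / 2)) → A i j = ldr)
    (hA_stub : ∀ i j : Fin (nr + ns), (i : ℕ) < nr → nr ≤ (j : ℕ) →
      A i j ∈ Set.Ico (0 : ℝ) 1)
    (hA_ss : ∀ i j : Fin (nr + ns), nr ≤ (i : ℕ) → nr ≤ (j : ℕ) → A i j = 0)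
    (hA_rowsum : ∀ i : Fin (nr + ns), (i : ℕ) < nr →
      (∑ j ∈ Finset.univ.filter (fun j : Fin (nr + ns) => nr ≤ (j : ℕ)), A i j) = ls)
    (Ω : Type) [MeasurableSpace Ω] (P : Measure Ω) [IsProbabilityMeasure P]
    (edge : ℕ → Ω → Fin (nr + ns) × Fin (nr + ns))
    (hmeas : ∀ t, Measurable (edge t))
    (hlt : ∀ t ω, (edge t ω).1 < (edge t ω).2)
    (hdist : ∀ (t : ℕ) (i j : Fin (nr + ns)), i < j →
      P {ω | edge t ω = (i, j)} = ENNReal.ofReal (A i j / alphaW nr ns A))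
    (hindep : iIndepFun edge P)
    (l1 : ℝ) (hl1 : l1 = ls / (2 * alphaW nr ns A))
    :
    ∀ t : ℕ,
      (∫ ω, ⨆ j : Fin nr, ∑ i : Fin nr,
          |(((List.range (t + 1)).map fun s => Qmat nr ns (edge s ω)).prod) i j| ∂P) ≤
        (nr : ℝ) ^ ((3 : ℝ) / 2) * (1 - l1) ^ (t + 1) := by
  intro t
  have hA_nonneg : ∀ i j : Fin (nr + ns), i < j → 0 ≤ A i j := fun i j hij => by
    have : (i : ℕ) < j := hij
    by_cases hj : (j : ℕ) < nr
    · by_cases hc : (i : ℕ) < nr / 2 ↔ (j : ℕ) < nr / 2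
      · exact hA_same i j hij.ne (by omega) hj hc ▸ hlsr.1.le
      · exact hA_diff i j (by omega) hj hc ▸ hldr.1.le
    by_cases hi : (i : ℕ) < nr
    · exact (hA_stub i j hi (by omega)).1
    · exact (hA_ss i j (by omega) (by omega)).ge
  have hrow : ∀ s k, ∫ ω, (Qmat nr ns (edge s ω) *ᵥ 1) k ∂P = 1 - l1 := fun s k => hl1 ▸
    integral_Qmat_mulVec_one (hmeas s) (hlt s) (hdist s) (alphaW_nonneg hA_nonneg) k
      (fun j hj => (hA_stub _ j k.isLt hj).1) (hA_rowsum _ k.isLt)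
  have hrate_nonneg : 0 ≤ 1 - l1 := by
    rw [← hrow 0 ⟨0, hnr_pos⟩]
    exact integral_nonneg fun ω =>
      dotProduct_nonneg_of_nonneg (fun j => Qmat_nonneg (hlt 0 ω).ne _ j) zero_le_one
  have hprod_nonneg : ∀ ω i j,
      0 ≤ ((List.range (t + 1)).map fun s => Qmat nr ns (edge s ω)).prod i j := fun ω =>
    Matrix.list_prod_nonneg <| List.forall_mem_map.2 fun s _ => Qmat_nonneg (hlt s ω).ne
  calc _ ≤ ∫ ω, 1 ⬝ᵥ ((List.range (t + 1)).map fun s => Qmat nr ns (edge s ω)).prod *ᵥ 1 ∂P :=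
        integral_mono_of_nonneg
          (.of_forall fun ω => Real.iSup_nonneg fun j => sum_nonneg fun i _ => abs_nonneg _)
          (integrable_comp_list_prod hmeas _ _ fun M => 1 ⬝ᵥ M *ᵥ 1)
          (.of_forall fun ω => Matrix.iSup_sum_abs_le_one_dotProduct_mulVec_one (hprod_nonneg ω))
    _ = nr * (1 - l1) ^ (t + 1) := by
        rw [integral_one_dotProduct_list_prod_mulVec_one hmeas hindep _ hrow, Fintype.card_fin]
    _ ≤ (nr : ℝ) ^ ((3 : ℝ) / 2) * (1 - l1) ^ (t + 1) := by
        gcongr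
        exact Real.self_le_rpow_of_one_le (by exact_mod_cast hnr_pos) (by norm_num)

theorem gossip_product_column_norm_bound
    (nr ns : ℕ) (hnr_even : Even nr) (hnr_pos : 0 < nr) (hns_pos : 0 < ns)
    (A : Matrix (Fin (nr + ns)) (Fin (nr + ns)) ℝ)
    (hA_symm : A.IsSymm) (hA_diag : ∀ i, A i i = 0)
    (lsr ldr ls : ℝ)
    (hlsr : lsr ∈ Set.Ioo (0 : ℝ) 1) (hldr : ldr ∈ Set.Ioo (0 : ℝ) 1)
    (hls_nonneg : 0 ≤ ls)
    (hA_same : ∀ i j : Fin (nr + ns), i ≠ j → (i : ℕ) < nr → (j : ℕ) < nr →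
      (((i : ℕ) < nr / 2) ↔ ((j : ℕ) < nr / 2)) → A i j = lsr)
    (hA_diff : ∀ i j : Fin (nr + ns), (i : ℕ) < nr → (j : ℕ) < nr →
      ¬(((i : ℕ) < nr / 2) ↔ ((j : ℕ) < nr / 2)) → A i j = ldr)
    (hA_stub : ∀ i j : Fin (nr + ns), (i : ℕ) < nr → nr ≤ (j : ℕ) →
      A i j ∈ Set.Ico (0 : ℝ) 1)
    (hA_ss : ∀ i j : Fin (nr + ns), nr ≤ (i : ℕ) → nr ≤ (j : ℕ) → A i j = 0)
    (hA_rowsum : ∀ i : Fin (nr + ns), (i : ℕ) < nr →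
      (∑ j ∈ Finset.univ.filter (fun j : Fin (nr + ns) => nr ≤ (j : ℕ)), A i j) = ls)
    (Ω : Type) [MeasurableSpace Ω] (P : Measure Ω) [IsProbabilityMeasure P]
    (edge : ℕ → Ω → Fin (nr + ns) × Fin (nr + ns))
    (hmeas : ∀ t, Measurable (edge t))
    (hlt : ∀ t ω, (edge t ω).1 < (edge t ω).2)
    (hdist : ∀ (t : ℕ) (i j : Fin (nr + ns)), i < j →
      P {ω | edge t ω = (i, j)} = ENNReal.ofReal (A i j / alphaW nr ns A))
    (hindep : iIndepFun edge P)
    (hls_pos : 0 < ls)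
    (l1 : ℝ) (hl1 : l1 = ls / (2 * alphaW nr ns A))
    :
    ∀ t : ℕ,
      (∫ ω, ⨆ j : Fin nr, ∑ i : Fin nr,
          |(((List.range (t + 1)).map fun s => Qmat nr ns (edge s ω)).prod) i j| ∂P) ≤
        (nr : ℝ) ^ ((3 : ℝ) / 2) * (1 - l1) ^ (t + 1) :=
  gossip_product_column_norm_bound_general nr ns hnr_pos A lsr ldr ls hlsr hldr hA_same hA_diff
    hA_stub hA_ss hA_rowsum Ω P edge hmeas hlt hdist hindep l1 hl1
end
end
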